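/- arXiv:2211.15773 — 5 statements merged into one kernel-verified Lean document; each statement's English description precedes it below -/
import Mathlib

section
/- Suppose u₀ has no zeros, i.e. there is α₀ > 0 with |u₀(x)| ≥ α₀ for all x ∈ ℝ². Then there exist constants C₀, ε₀ > 0, depending only on u₀, such that for every ε ∈ (0, ε₀) and every solution u of the Ginzburg–Landau heat flow with initial data u₀, one has u(t,x) ≠ 0 for every t ∈ [0, T_ε] (where T_ε = ln(1/ε) − (1/2)·ln ln(1/ε) − C₀) and every x ∈ ℝ². -/
/-!
Two maximum-principle arguments on the torus `ℝ²/ℤ²`. First, for a fixed shift `h` the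
difference `w = u(·+h) - u` satisfies `∂ₜ|w|² ≤ 2|w|²` at a spatial maximum of `|w|²`, because
`⟨w, Δw⟩ ≤ 0` there and `v ↦ (1 - |v|²) v` is one-sided 1-Lipschitz; so `u(t)` is
`K eᵗ`-Lipschitz when `u₀` is `K`-Lipschitz. Second, at a spatial minimum of `|u|²` we have
`⟨u, Δu⟩ ≥ -|∇u|² ≥ -2K²e²ᵗ`, which gives `|u|² ≥ m - 2K²ε²(e²ᵗ - 1)` with `m = min(α₀², 1)`.
Since `ε² e^{2T_ε} = e^{-2C₀} / ln(1/ε)`, this lower bound stays positive up to `T_ε` once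
`2K² e^{-2C₀} < m`.
-/

open MeasureTheory Real Set Filter

noncomputable section

/-- The plane ℝ² with its Euclidean norm. -/
abbrev E2 := EuclideanSpace ℝ (Fin 2)

/-- An integer vector in ℝ². -/
def intVec (k : Fin 2 → ℤ) : E2 := WithLp.toLp 2 (fun i => (k i : ℝ))

/-- Componentwise Laplacian of a map `f : ℝ² → ℝ²`. -/
def lap (f : E2 → E2) (x : E2) : E2 :=
  ∑ i : Fin 2, fderiv ℝ (fun y => fderiv ℝ f y (EuclideanSpace.single i 1)) x
    (EuclideanSpace.single i 1)

/-- Solution of the Ginzburg-Landau heat flow `∂ₜ u = ε² Δu + (1-|u|²)u`, `u(0,·) = u₀`,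
ℤ²-periodic in space, continuous on `[0,∞) × ℝ²`, C² in space and differentiable in time
on `(0,∞) × ℝ²`. -/
structure IsGLSolution (eps : ℝ) (u0 : E2 → E2) (u : ℝ → E2 → E2) : Prop where
  periodic : ∀ t x k, u t (x + intVec k) = u t x
  cont : ContinuousOn (fun p : ℝ × E2 => u p.1 p.2) (Set.Ici 0 ×ˢ Set.univ)
  space_smooth : ∀ t > (0:ℝ), ContDiff ℝ 2 (u t)
  pde : ∀ t > (0:ℝ), ∀ x, HasDerivAt (fun s => u s x)
    (eps ^ 2 • lap (u t) x + (1 - ‖u t x‖ ^ 2) • u t x) t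
  init : ∀ x, u 0 x = u0 x

/-- The unit square `[0,1)²`. -/
def unitBox : Set E2 := {x | ∀ i, x i ∈ Set.Ico (0:ℝ) 1}

open Topology
open scoped RealInnerProductSpace NNReal

theorem le_of_forall_pos_le_add_mul {a b t : ℝ} (ht : 0 ≤ t) (h : ∀ δ > 0, a ≤ b + δ * t) :
    a ≤ b := by
  refine le_of_forall_pos_le_add fun ε hε => (h (ε / (t + 1)) (by positivity)).trans ?_
  rw [div_mul_eq_mul_div, add_le_add_iff_left, div_le_iff₀ (by positivity)]
  nlinarith

theorem sq_mul_exp_two_mul_le {ε C : ℝ} (hε : 0 < ε) (hε1 : ε < exp (-1)) :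
    ε ^ 2 * exp (2 * (log (1 / ε) - 1 / 2 * log (log (1 / ε)) - C)) ≤ exp (-(2 * C)) := by
  set L := log (1 / ε) with hL_def
  rw [one_div, log_inv] at hL_def
  have hL : 1 < L := by
    have := log_lt_log hε hε1
    rw [log_exp] at this
    linarith
  have hε_eq : ε = exp (-L) := by rw [hL_def, neg_neg, exp_log hε]
  calc _ = exp (-(2 * C)) * exp (-log L) := by
        rw [hε_eq, sq, ← exp_add, ← exp_add, ← exp_add]; ring_nf
    _ ≤ exp (-(2 * C)) * 1 := by
        gcongr
        rw [exp_neg, exp_log (by linarith)]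
        exact inv_le_one_of_one_le₀ hL.le
    _ = _ := mul_one _

section

variable {E F : Type*} [NormedAddCommGroup E] [NormedSpace ℝ E]
  [NormedAddCommGroup F] [InnerProductSpace ℝ F]

theorem IsMaxOn.hasDerivAt_nonneg {f : ℝ → ℝ} {a b t d : ℝ} (h : IsMaxOn f (Icc a b) t)
    (hd : HasDerivAt f d t) (ht : t ∈ Ioc a b) : 0 ≤ d := by
  have hcone : a - t ∈ posTangentConeAt (Icc a b) t := by
    refine sub_mem_posTangentConeAt_of_segment_subset ?_
    rw [segment_eq_Icc' t a, min_eq_right ht.1.le, max_eq_left ht.1.le]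
    exact Icc_subset_Icc_right ht.2
  have := h.localize.hasFDerivWithinAt_nonpos hd.hasFDerivAt.hasFDerivWithinAt hcone
  rw [ContinuousLinearMap.toSpanSingleton_apply, smul_eq_mul] at this
  nlinarith [ht.1]

theorem IsLocalMin.nonneg_of_hasDerivAt_deriv {φ φ' : ℝ → ℝ} {a d : ℝ} (h : IsLocalMin φ a)
    (hφ : ∀ s, HasDerivAt φ (φ' s) s) (hφ' : HasDerivAt φ' d a) : 0 ≤ d := by
  by_contra! hd
  have hφa : φ' a = 0 := h.hasDerivAt_eq_zero (hφ a)
  have hneg : ∀ᶠ s in 𝓝[>] a, φ' s < 0 := by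
    filter_upwards [((hasDerivAt_iff_tendsto_slope.1 hφ').mono_left
      (nhdsGT_le_nhdsNE a)).eventually (eventually_lt_nhds hd), self_mem_nhdsWithin]
      with s hs has
    rw [slope_def_field, hφa, sub_zero, div_lt_iff₀ (sub_pos.2 has), zero_mul] at hs
    exact hs
  obtain ⟨b, hab, hb⟩ := mem_nhdsGT_iff_exists_Ioo_subset.1 (hneg.and (nhdsWithin_le_nhds h))
  have hm : (a + b) / 2 ∈ Ioo a b := ⟨by linarith [mem_Ioi.1 hab], by linarith [mem_Ioi.1 hab]⟩
  obtain ⟨c, hc, hslope⟩ := exists_hasDerivAt_eq_slope φ φ' hm.1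
    (fun x _ => (hφ x).continuousAt.continuousWithinAt) (fun x _ => hφ x)
  have hc_neg : φ' c < 0 := (hb ⟨hc.1, hc.2.trans hm.2⟩).1
  rw [hslope] at hc_neg
  exact hc_neg.not_ge (div_nonneg (sub_nonneg.2 (hb hm).2) (sub_nonneg.2 hm.1.le))

theorem IsLocalMax.nonpos_of_hasDerivAt_deriv {φ φ' : ℝ → ℝ} {a d : ℝ} (h : IsLocalMax φ a)
    (hφ : ∀ s, HasDerivAt φ (φ' s) s) (hφ' : HasDerivAt φ' d a) : d ≤ 0 :=
  neg_nonneg.1 <| h.neg.nonneg_of_hasDerivAt_deriv (fun s => (hφ s).neg) hφ'.neg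

theorem hasDerivAt_two_mul_inner {c c' : ℝ → F} {c'' : F} {a : ℝ} (hc : HasDerivAt c (c' a) a)
    (hc' : HasDerivAt c' c'' a) :
    HasDerivAt (fun s => 2 * ⟪c s, c' s⟫) (2 * (‖c' a‖ ^ 2 + ⟪c a, c''⟫)) a := by
  refine ((hc.inner ℝ hc').const_mul 2).congr_deriv ?_
  rw [real_inner_self_eq_norm_sq, add_comm]

theorem IsLocalMin.norm_deriv_sq_add_inner_nonneg {c c' : ℝ → F} {c'' : F} {a : ℝ}
    (h : IsLocalMin (fun s => ‖c s‖ ^ 2) a) (hc : ∀ s, HasDerivAt c (c' s) s)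
    (hc' : HasDerivAt c' c'' a) : 0 ≤ ‖c' a‖ ^ 2 + ⟪c a, c''⟫ := by
  have := h.nonneg_of_hasDerivAt_deriv (fun s => (hc s).norm_sq)
    (hasDerivAt_two_mul_inner (hc a) hc')
  linarith

theorem IsLocalMax.norm_deriv_sq_add_inner_nonpos {c c' : ℝ → F} {c'' : F} {a : ℝ}
    (h : IsLocalMax (fun s => ‖c s‖ ^ 2) a) (hc : ∀ s, HasDerivAt c (c' s) s)
    (hc' : HasDerivAt c' c'' a) : ‖c' a‖ ^ 2 + ⟪c a, c''⟫ ≤ 0 := by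
  have := h.nonpos_of_hasDerivAt_deriv (fun s => (hc s).norm_sq)
    (hasDerivAt_two_mul_inner (hc a) hc')
  linarith

theorem DifferentiableAt.hasDerivAt_comp_add_smul {g : E → F} {x v : E} {s : ℝ}
    (hg : DifferentiableAt ℝ g (x + s • v)) :
    HasDerivAt (fun s : ℝ => g (x + s • v)) (fderiv ℝ g (x + s • v) v) s :=
  hg.hasFDerivAt.comp_hasDerivAt s (by simpa using ((hasDerivAt_id s).smul_const v).const_add x)

theorem ContDiff.hasDerivAt_fderiv_apply_comp_add_smul {g : E → F} (hg : ContDiff ℝ 2 g)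
    (x v : E) :
    HasDerivAt (fun s : ℝ => fderiv ℝ g (x + s • v) v)
      (fderiv ℝ (fun y => fderiv ℝ g y v) x v) 0 := by
  have hg' : ContDiff ℝ 1 (fun y => fderiv ℝ g y v) :=
    (hg.fderiv_right (by norm_num)).clm_apply contDiff_const
  simpa using (hg'.differentiable one_ne_zero (x + (0 : ℝ) • v)).hasDerivAt_comp_add_smul

theorem inner_sub_nonlinearity_sub_le (a b : F) :
    ⟪a - b, (1 - ‖a‖ ^ 2) • a - (1 - ‖b‖ ^ 2) • b⟫ ≤ ‖a - b‖ ^ 2 := by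
  have hab : ⟪a, b⟫ ≤ ‖a‖ * ‖b‖ := real_inner_le_norm a b
  have hexpand : ⟪a - b, (1 - ‖a‖ ^ 2) • a - (1 - ‖b‖ ^ 2) • b⟫ =
      ‖a - b‖ ^ 2 - (‖a‖ ^ 2 * (‖a‖ ^ 2 - ⟪a, b⟫) + ‖b‖ ^ 2 * (‖b‖ ^ 2 - ⟪a, b⟫)) := by
    rw [← real_inner_self_eq_norm_sq (a - b)]
    simp only [inner_sub_left, inner_sub_right, real_inner_smul_right,
      real_inner_self_eq_norm_sq, real_inner_comm b a]
    ring
  rw [hexpand]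
  nlinarith [norm_nonneg a, norm_nonneg b, sq_nonneg (‖a‖ - ‖b‖), sq_nonneg (‖a‖ + ‖b‖)]

theorem inner_sub_gl_sub_le (eps : ℝ) {a b p q : F} (hpq : ⟪a - b, p - q⟫ ≤ 0) :
    ⟪a - b, (eps ^ 2 • p + (1 - ‖a‖ ^ 2) • a) - (eps ^ 2 • q + (1 - ‖b‖ ^ 2) • b)⟫ ≤
      ‖a - b‖ ^ 2 := by
  have hsplit : (eps ^ 2 • p + (1 - ‖a‖ ^ 2) • a) - (eps ^ 2 • q + (1 - ‖b‖ ^ 2) • b) =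
      eps ^ 2 • (p - q) + ((1 - ‖a‖ ^ 2) • a - (1 - ‖b‖ ^ 2) • b) := by
    rw [smul_sub]; abel
  rw [hsplit, inner_add_right, real_inner_smul_right]
  nlinarith [inner_sub_nonlinearity_sub_le a b, sq_nonneg eps]

end

theorem inner_lap_sub_nonpos_of_isMaxOn {g : E2 → E2} (hg : ContDiff ℝ 2 g) {x h : E2}
    (hmax : IsMaxOn (fun y => ‖g (y + h) - g y‖ ^ 2) univ x) :
    ⟪g (x + h) - g x, lap g (x + h) - lap g x⟫ ≤ 0 := by
  have hg1 : Differentiable ℝ g := hg.differentiable (by norm_num)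
  rw [lap, lap, ← Finset.sum_sub_distrib, inner_sum]
  refine Finset.sum_nonpos fun i _ => ?_
  set v : E2 := EuclideanSpace.single i 1
  have hline : IsLocalMax (fun s : ℝ => ‖g (x + h + s • v) - g (x + s • v)‖ ^ 2) 0 :=
    IsMaxOn.isLocalMax (fun s _ => by simpa [add_right_comm] using hmax (mem_univ (x + s • v)))
      univ_mem
  have := hline.norm_deriv_sq_add_inner_nonpos
    (fun s => (hg1 _).hasDerivAt_comp_add_smul.sub (hg1 _).hasDerivAt_comp_add_smul)
    ((hg.hasDerivAt_fderiv_apply_comp_add_smul (x + h) v).sub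
      (hg.hasDerivAt_fderiv_apply_comp_add_smul x v))
  simp only [zero_smul, add_zero] at this
  linarith [sq_nonneg ‖fderiv ℝ g (x + h) v - fderiv ℝ g x v‖]

theorem neg_two_mul_sq_le_inner_lap_of_isMinOn {g : E2 → E2} (hg : ContDiff ℝ 2 g) {x : E2}
    (hmin : IsMinOn (fun y => ‖g y‖ ^ 2) univ x) {L : ℝ} (hL : ‖fderiv ℝ g x‖ ≤ L) :
    -(2 * L ^ 2) ≤ ⟪g x, lap g x⟫ := by
  have hg1 : Differentiable ℝ g := hg.differentiable (by norm_num)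
  rw [show -(2 * L ^ 2) = ∑ _i : Fin 2, -L ^ 2 by simp, lap, inner_sum]
  refine Finset.sum_le_sum fun i _ => ?_
  set v : E2 := EuclideanSpace.single i 1
  have hline : IsLocalMin (fun s : ℝ => ‖g (x + s • v)‖ ^ 2) 0 :=
    IsMinOn.isLocalMin (fun s _ => by simpa using hmin (mem_univ (x + s • v))) univ_mem
  have := hline.norm_deriv_sq_add_inner_nonneg (fun s => (hg1 _).hasDerivAt_comp_add_smul)
    (hg.hasDerivAt_fderiv_apply_comp_add_smul x v)
  simp only [zero_smul, add_zero] at this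
  have hv : ‖fderiv ℝ g x v‖ ≤ L := by
    simpa [v] using (fderiv ℝ g x).le_of_opNorm_le hL v
  linarith [pow_le_pow_left₀ (norm_nonneg _) hv 2]

theorem exists_isCompact_add_intVec_eq :
    ∃ K : Set E2, IsCompact K ∧ ∀ x, ∃ y ∈ K, ∃ k, y + intVec k = x := by
  refine ⟨WithLp.toLp 2 '' univ.pi fun _ => Icc 0 1,
    (isCompact_univ_pi fun _ => isCompact_Icc).image (PiLp.continuous_toLp 2 _), fun x => ?_⟩
  refine ⟨WithLp.toLp 2 fun i => Int.fract (x i),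
    ⟨_, fun i _ => ⟨Int.fract_nonneg _, (Int.fract_lt_one _).le⟩, rfl⟩, fun i => ⌊x i⌋, ?_⟩
  ext i
  simp [intVec]

theorem ContDiff.lipschitzWith_of_periodic {F : Type*} [NormedAddCommGroup F]
    [NormedSpace ℝ F] {f : E2 → F} (hf : ContDiff ℝ 1 f)
    (hper : ∀ x k, f (x + intVec k) = f x) : ∃ K, LipschitzWith K f := by
  obtain ⟨S, hS, hcover⟩ := exists_isCompact_add_intVec_eq
  obtain ⟨C, hC⟩ := (hS.image_of_continuousOn
    (hf.continuous_fderiv one_ne_zero).nnnorm.continuousOn).bddAbove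
  refine ⟨C, lipschitzWith_of_nnnorm_fderiv_le (hf.differentiable one_ne_zero) fun x => ?_⟩
  obtain ⟨y, hy, k, rfl⟩ := hcover x
  rw [← fderiv_comp_add_right, funext fun z => hper z k]
  exact hC ⟨y, hy, rfl⟩

theorem periodic_maximum_principle {V : ℝ → E2 → ℝ} {c : ℝ}
    (hV : ContinuousOn (fun p : ℝ × E2 => V p.1 p.2) (Ici 0 ×ˢ univ))
    (hper : ∀ t x k, V t (x + intVec k) = V t x) (hinit : ∀ x, V 0 x ≤ c)
    (hstep : ∀ t > 0, ∀ x, IsMaxOn (V t) univ x → c < V t x →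
      ∃ d < 0, HasDerivAt (V · x) d t)
    {t : ℝ} (ht : 0 ≤ t) (x : E2) : V t x ≤ c := by
  by_contra! hlt
  obtain ⟨K, hK, hcover⟩ := exists_isCompact_add_intVec_eq
  obtain ⟨y, hyK, -⟩ := hcover x
  obtain ⟨⟨t₀, x₀⟩, ⟨ht₀, -⟩, hmax⟩ := (isCompact_Icc.prod hK).exists_isMaxOn
    ⟨(t, y), ⟨ht, le_rfl⟩, hyK⟩ (hV.mono (prod_mono Icc_subset_Ici_self (subset_univ _)))
  have hglobal : ∀ s ∈ Icc 0 t, ∀ z, V s z ≤ V t₀ x₀ := by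
    intro s hs z
    obtain ⟨y, hy, k, rfl⟩ := hcover z
    rw [hper]
    exact hmax (show (s, y) ∈ Icc 0 t ×ˢ K from ⟨hs, hy⟩)
  have hc : c < V t₀ x₀ := hlt.trans_le (hglobal t ⟨ht, le_rfl⟩ x)
  have ht₀pos : 0 < t₀ := ht₀.1.lt_of_ne (by rintro rfl; exact (hinit x₀).not_gt hc)
  obtain ⟨d, hd, hderiv⟩ := hstep t₀ ht₀pos x₀ (fun z _ => hglobal t₀ ht₀ z) hc
  have htime : IsMaxOn (V · x₀) (Icc 0 t) t₀ := fun s hs => hglobal s hs x₀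
  exact hd.not_ge (htime.hasDerivAt_nonneg hderiv ⟨ht₀pos, ht₀.2⟩)

section

variable {eps : ℝ} {u0 : E2 → E2} {u : ℝ → E2 → E2}

theorem IsGLSolution.continuousOn_comp_add (sol : IsGLSolution eps u0 u) (h : E2) :
    ContinuousOn (fun p : ℝ × E2 => u p.1 (p.2 + h)) (Ici 0 ×ˢ univ) :=
  sol.cont.comp (continuous_fst.prodMk (continuous_snd.add continuous_const)).continuousOn
    fun _ hp => ⟨hp.1, trivial⟩

theorem IsGLSolution.norm_sub_sq_mul_exp_le (sol : IsGLSolution eps u0 u) {K : ℝ≥0}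
    (hK : LipschitzWith K u0) (h : E2) {t : ℝ} (ht : 0 ≤ t) (x : E2) :
    ‖u t (x + h) - u t x‖ ^ 2 * exp (-(2 * t)) ≤ (K * ‖h‖) ^ 2 := by
  refine le_of_forall_pos_le_add_mul ht fun δ hδ => ?_
  suffices ‖u t (x + h) - u t x‖ ^ 2 * exp (-(2 * t)) - δ * t ≤ (K * ‖h‖) ^ 2 by linarith
  refine periodic_maximum_principle
    (V := fun s y => ‖u s (y + h) - u s y‖ ^ 2 * exp (-(2 * s)) - δ * s) ?_ ?_ ?_ ?_ ht x
  · exact ((((sol.continuousOn_comp_add h).sub sol.cont).norm.pow 2).mul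
      (by fun_prop : Continuous fun p : ℝ × E2 => exp (-(2 * p.1))).continuousOn).sub
      (by fun_prop : Continuous fun p : ℝ × E2 => δ * p.1).continuousOn
  · intro s y k
    simp only [add_right_comm y (intVec k) h, sol.periodic]
  · intro y
    simpa [sol.init] using pow_le_pow_left₀ (norm_nonneg _) (hK.norm_sub_le (y + h) y) 2
  · intro s hs y hmax _
    have hspace : IsMaxOn (fun z => ‖u s (z + h) - u s z‖ ^ 2) univ y := fun z _ =>
      le_of_mul_le_mul_right (by simpa using hmax (mem_univ z)) (exp_pos (-(2 * s)))
    have hdiss := inner_sub_gl_sub_le eps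
      (inner_lap_sub_nonpos_of_isMaxOn (sol.space_smooth s hs) hspace)
    have hweight : HasDerivAt (fun r => exp (-(2 * r))) (exp (-(2 * s)) * -(2 * 1)) s :=
      ((hasDerivAt_id s).const_mul 2).neg.exp
    refine ⟨_, ?_, ((((sol.pde s hs (y + h)).sub (sol.pde s hs y)).norm_sq.mul hweight).sub
      ((hasDerivAt_id s).const_mul δ))⟩
    simp only [Pi.sub_apply]
    nlinarith [mul_le_mul_of_nonneg_right hdiss (exp_pos (-(2 * s))).le]

theorem IsGLSolution.norm_sub_le (sol : IsGLSolution eps u0 u) {K : ℝ≥0}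
    (hK : LipschitzWith K u0) {t : ℝ} (ht : 0 ≤ t) (x h : E2) :
    ‖u t (x + h) - u t x‖ ≤ K * exp t * ‖h‖ := by
  have hexp : exp (-(2 * t)) * exp t ^ 2 = 1 := by
    rw [sq, ← exp_add, ← exp_add, show -(2 * t) + (t + t) = 0 by ring, exp_zero]
  refine (pow_le_pow_iff_left₀ (norm_nonneg _) (by positivity) two_ne_zero).1 ?_
  calc ‖u t (x + h) - u t x‖ ^ 2
      = ‖u t (x + h) - u t x‖ ^ 2 * exp (-(2 * t)) * exp t ^ 2 := by rw [mul_assoc, hexp, mul_one]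
    _ ≤ (K * ‖h‖) ^ 2 * exp t ^ 2 := by gcongr; exact sol.norm_sub_sq_mul_exp_le hK h ht x
    _ = (K * exp t * ‖h‖) ^ 2 := by ring

theorem IsGLSolution.norm_fderiv_le (sol : IsGLSolution eps u0 u) {K : ℝ≥0}
    (hK : LipschitzWith K u0) {t : ℝ} (ht : 0 ≤ t) (x : E2) :
    ‖fderiv ℝ (u t) x‖ ≤ K * exp t :=
  norm_fderiv_le_of_lip' ℝ (by positivity) <| Eventually.of_forall fun y => by
    simpa using sol.norm_sub_le hK ht x (y - x)

theorem IsGLSolution.le_norm_sq (sol : IsGLSolution eps u0 u) {K : ℝ≥0}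
    (hK : LipschitzWith K u0) {m : ℝ} (hm : ∀ x, m ≤ ‖u0 x‖ ^ 2) (hm1 : m ≤ 1) {t : ℝ}
    (ht : 0 ≤ t) (x : E2) :
    m - 2 * K ^ 2 * eps ^ 2 * (exp (2 * t) - 1) ≤ ‖u t x‖ ^ 2 := by
  refine le_of_forall_pos_le_add_mul ht fun δ hδ => ?_
  suffices m - 2 * K ^ 2 * eps ^ 2 * (exp (2 * t) - 1) - δ * t - ‖u t x‖ ^ 2 ≤ 0 by linarith
  refine periodic_maximum_principle
    (V := fun s y => m - 2 * K ^ 2 * eps ^ 2 * (exp (2 * s) - 1) - δ * s - ‖u s y‖ ^ 2)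
    ?_ ?_ ?_ ?_ ht x
  · exact (by fun_prop : Continuous fun p : ℝ × E2 =>
      m - 2 * K ^ 2 * eps ^ 2 * (exp (2 * p.1) - 1) - δ * p.1).continuousOn.sub
      (sol.cont.norm.pow 2)
  · intro s y k
    simp only [sol.periodic]
  · intro y
    simpa [sol.init] using hm y
  · intro s hs y hmax hpos
    have hspace : IsMinOn (fun z => ‖u s z‖ ^ 2) univ y := fun z _ =>
      show ‖u s y‖ ^ 2 ≤ ‖u s z‖ ^ 2 by linarith [isMaxOn_iff.1 hmax z (mem_univ z)]
    have hlap := neg_two_mul_sq_le_inner_lap_of_isMinOn (sol.space_smooth s hs) hspace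
      (sol.norm_fderiv_le hK hs.le y)
    -- keeps the reaction term `(1 - |u|²)|u|²` nonnegative
    have hb1 : ‖u s y‖ ^ 2 ≤ 1 := by
      have : 0 ≤ 2 * K ^ 2 * eps ^ 2 * (exp (2 * s) - 1) :=
        mul_nonneg (by positivity) (sub_nonneg.2 (one_le_exp (by positivity)))
      nlinarith
    rw [mul_pow, sq (exp s), ← exp_add, ← two_mul] at hlap
    have hgrowth : HasDerivAt (fun r => exp (2 * r)) (exp (2 * s) * (2 * 1)) s :=
      ((hasDerivAt_id s).const_mul 2).exp
    refine ⟨_, ?_, ((((hasDerivAt_const s m).sub ((hgrowth.sub_const 1).const_mul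
      (2 * K ^ 2 * eps ^ 2))).sub ((hasDerivAt_id s).const_mul δ)).sub
      (sol.pde s hs y).norm_sq)⟩
    rw [inner_add_right, real_inner_smul_right, real_inner_smul_right,
      real_inner_self_eq_norm_sq]
    nlinarith [mul_le_mul_of_nonneg_left hlap (sq_nonneg eps),
      mul_nonneg (sub_nonneg.2 hb1) (sq_nonneg ‖u s y‖)]

end

/-- Corollary: no zeros are created: if `u₀` has no zeros (uniformly),
then for small `ε` the solution has no zeros up to time
`T_ε = ln(1/ε) - (1/2) ln ln(1/ε) - C₀`. -/
theorem no_zeros_created (u0 : E2 → E2) (hu0 : ContDiff ℝ 1 u0)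
    (hu0per : ∀ x k, u0 (x + intVec k) = u0 x)
    (hnozero : ∃ α0 > (0:ℝ), ∀ x, α0 ≤ ‖u0 x‖) :
    ∃ C0 > (0:ℝ), ∃ ε0 > (0:ℝ), ∀ ε ∈ Set.Ioo (0:ℝ) ε0,
      ∀ u : ℝ → E2 → E2, IsGLSolution ε u0 u →
        ∀ t ∈ Set.Icc (0:ℝ)
          (Real.log (1/ε) - (1/2) * Real.log (Real.log (1/ε)) - C0),
          ∀ x : E2, u t x ≠ 0 := by
  obtain ⟨α0, hα0, hα0u⟩ := hnozero
  obtain ⟨K, hK⟩ := hu0.lipschitzWith_of_periodic hu0per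
  set m := min (α0 ^ 2) 1
  have hm : ∀ x, m ≤ ‖u0 x‖ ^ 2 := fun x =>
    (min_le_left _ _).trans (pow_le_pow_left₀ hα0.le (hα0u x) 2)
  set C0 := 1 + K ^ 2 / m
  -- `e^{2C₀} ≥ 1 + 2C₀ > 2K²/m`
  have hC0 : 2 * K ^ 2 * exp (-(2 * C0)) < m := by
    have hm0 : 0 < m := by positivity
    have := add_one_le_exp (2 * C0)
    have : m * (2 * C0) = 2 * m + 2 * K ^ 2 := by simp only [C0]; field_simp
    rw [exp_neg, ← div_eq_mul_inv, div_lt_iff₀ (exp_pos _)]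
    nlinarith
  refine ⟨C0, by positivity, exp (-1), exp_pos _, fun ε hε u sol t ht x => ?_⟩
  have hsmall : ε ^ 2 * exp (2 * t) ≤ exp (-(2 * C0)) :=
    (mul_le_mul_of_nonneg_left (exp_le_exp.2 (by linarith [ht.2])) (sq_nonneg ε)).trans
      (sq_mul_exp_two_mul_le hε.1 hε.2)
  have hlow := sol.le_norm_sq hK hm (min_le_right _ _) ht.1 x
  have : 0 < ‖u t x‖ ^ 2 := by
    nlinarith [mul_le_mul_of_nonneg_left hsmall (sq_nonneg (K : ℝ))]
  exact fun h0 => by simp [h0] at this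
end
end

section
/- Let ε > 0, let v, F : [0,∞) × ℝ² → ℝ² be continuous and ℤ²-periodic in the space variable with F bounded, and let w : [0,∞) × ℝ² → ℝ² be ℤ²-periodic in the space variable, continuous on [0,∞) × ℝ², C¹ in time and C² in space on (0,∞) × ℝ², satisfying ∂ₜw − ε²Δw = −2(v·w)v − |v|²w + F on (0,∞) × ℝ² and w(0,·) = 0. Then for every t ≥ 0, sup_{x∈ℝ²} |w(t,x)| ≤ ∫₀ᵗ sup_{x∈ℝ²} |F(s,x)| ds. -/
open MeasureTheory Real Set Filter

noncomputable section

/-! Let `m t = ⨆ x, ‖w t x‖` and `h t = ⨆ x, ‖F t x‖`. By periodicity these are suprema over a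
compact cell, so they are attained and continuous in `t`. If `m t > 0` is attained at `x₀`,
then `w · Δw ≤ 0` at `(t, x₀)` and `⟪w, -2 (v·w) v - |v|² w⟫ = -2 (v·w)² - |v|² |w|² ≤ 0`, so
`∂ₜ ‖w(·, x₀)‖ ≤ ‖F t x₀‖ ≤ h t`, while `‖w(s, x₀)‖ ≤ m s` for all `s`. Compare `m` with the
barrier `ψ t = ∫₀ᵗ h + δ (t + 1)`: at the first time `t₀` with `ψ t₀ ≤ m t₀`, and `x₀` a
maximum point of `‖w t₀ ·‖`, the function `‖w(·, x₀)‖ - ψ` is maximal on `[0, t₀]` at `t₀`,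
so its derivative, at most `h t₀ - (h t₀ + δ)`, would be nonnegative. Hence `m < ψ`, and
`δ → 0` gives the bound. -/

open Topology
open scoped RealInnerProductSpace

def IntPeriodic {α : Type*} (q : E2 → α) : Prop := ∀ x k, q (x + intVec k) = q x

theorem IntPeriodic.comp {α β : Type*} {q : E2 → α} (hq : IntPeriodic q) (g : α → β) :
    IntPeriodic (fun x => g (q x)) :=
  fun x k => congrArg g (hq x k)

theorem exists_mem_unitBox_eq_add_intVec (x : E2) : ∃ y ∈ unitBox, ∃ k, x = y + intVec k := by
  refine ⟨x - intVec (fun i => ⌊x i⌋), fun i => ?_, fun i => ⌊x i⌋, by abel⟩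
  have hfract : (x - intVec fun i => ⌊x i⌋) i = Int.fract (x i) := by simp [intVec]
  rw [hfract]
  exact ⟨Int.fract_nonneg _, Int.fract_lt_one _⟩

def closedUnitBox : Set E2 := EuclideanSpace.equiv (Fin 2) ℝ ⁻¹' Icc 0 1

theorem isCompact_closedUnitBox : IsCompact closedUnitBox :=
  (EuclideanSpace.equiv (Fin 2) ℝ).toHomeomorph.isCompact_preimage.2 isCompact_Icc

theorem unitBox_subset_closedUnitBox : unitBox ⊆ closedUnitBox :=
  fun _ hx => ⟨fun i => (hx i).1, fun i => (hx i).2.le⟩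

theorem IntPeriodic.range_eq_image {α : Type*} {q : E2 → α} (hq : IntPeriodic q) :
    range q = q '' closedUnitBox := by
  refine (image_subset_range _ _).antisymm' ?_
  rintro _ ⟨x, rfl⟩
  obtain ⟨y, hy, k, rfl⟩ := exists_mem_unitBox_eq_add_intVec x
  exact ⟨y, unitBox_subset_closedUnitBox hy, (hq y k).symm⟩

theorem IntPeriodic.exists_forall_ge {g : E2 → ℝ} (hg : IntPeriodic g) (hc : Continuous g) :
    ∃ x₀, ∀ y, g y ≤ g x₀ := by
  obtain ⟨x₀, -, hx₀⟩ := isCompact_closedUnitBox.exists_isMaxOn ⟨0, by simp [closedUnitBox]⟩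
    hc.continuousOn
  refine ⟨x₀, fun y => ?_⟩
  obtain ⟨z, hz, hzy⟩ := hg.range_eq_image.le (mem_range_self y)
  exact hzy ▸ hx₀ hz

theorem IntPeriodic.bddAbove_range {g : E2 → ℝ} (hg : IntPeriodic g) (hc : Continuous g) :
    BddAbove (range g) :=
  hg.range_eq_image ▸ isCompact_closedUnitBox.bddAbove_image hc.continuousOn

theorem ContinuousOn.continuous_slice {X Y : Type*} [TopologicalSpace X] [TopologicalSpace Y]
    {f : ℝ → X → Y} {s : Set ℝ} (hf : ContinuousOn (fun p : ℝ × X => f p.1 p.2) (s ×ˢ univ))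
    {t : ℝ} (ht : t ∈ s) : Continuous (f t) :=
  hf.comp_continuous (.prodMk_right t) fun _ => ⟨ht, trivial⟩

theorem continuousOn_iSup_norm {f : ℝ → E2 → E2}
    (hf : ContinuousOn (fun p : ℝ × E2 => f p.1 p.2) (Ici 0 ×ˢ univ))
    (hper : ∀ t, IntPeriodic (f t)) :
    ContinuousOn (fun t => ⨆ x, ‖f t x‖) (Ici 0) := by
  -- clamping time at `0` extends `f` continuously to `ℝ × ℝ²`
  have hclamp : Continuous fun p : ℝ × E2 => (max p.1 0, p.2) :=
    (continuous_fst.max continuous_const).prodMk continuous_snd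
  have hc : Continuous ((fun p : ℝ × E2 => ‖f p.1 p.2‖) ∘ fun p : ℝ × E2 => (max p.1 0, p.2)) :=
    hf.norm.comp_continuous hclamp fun p => mk_mem_prod (le_max_right p.1 0) (mem_univ p.2)
  refine (isCompact_closedUnitBox.continuous_sSup (f := fun t x => ‖f (max t 0) x‖) hc)
    |>.continuousOn.congr fun t (ht : 0 ≤ t) => ?_
  simp only [max_eq_left ht]
  rw [iSup, ((hper t).comp norm).range_eq_image]

theorem HasDerivAt.norm {F : Type*} [NormedAddCommGroup F] [InnerProductSpace ℝ F]
    {f : ℝ → F} {f' : F} {t : ℝ} (hf : HasDerivAt f f' t) (ht : f t ≠ 0) :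
    HasDerivAt (fun s => ‖f s‖) (⟪f t, f'⟫ / ‖f t‖) t := by
  have hsq : ‖f t‖ ^ 2 ≠ 0 := by positivity
  have := hf.norm_sq.sqrt hsq
  simp only [Real.sqrt_sq (norm_nonneg _)] at this
  convert this using 1
  field_simp

theorem IsMaxOn.hasDerivAt_nonneg_of_right_endpoint {f : ℝ → ℝ} {f' a b : ℝ} (hab : a < b)
    (hmax : IsMaxOn f (Icc a b) b) (hf : HasDerivAt f f' b) : 0 ≤ f' := by
  have hcone : a - b ∈ posTangentConeAt (Icc a b) b :=
    sub_mem_posTangentConeAt_of_segment_subset (by rw [segment_symm, segment_eq_Icc hab.le])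
  have := hmax.localize.hasFDerivWithinAt_nonpos hf.hasFDerivAt.hasFDerivWithinAt hcone
  rw [ContinuousLinearMap.toSpanSingleton_apply, smul_eq_mul] at this
  nlinarith

theorem IsLocalMax.hasDerivAt_deriv_nonpos {φ φ' : ℝ → ℝ} {d : ℝ}
    (hmax : IsLocalMax φ 0) (hφ : ∀ r, HasDerivAt φ (φ' r) r) (hφ' : HasDerivAt φ' d 0) :
    d ≤ 0 := by
  by_contra! hd
  have h0 : φ' 0 = 0 := hmax.hasDerivAt_eq_zero (hφ 0)
  have hslope : ∀ᶠ r in 𝓝[>] 0, 0 < slope φ' 0 r :=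
    ((hasDerivAt_iff_tendsto_slope.mp hφ').mono_left (nhdsGT_le_nhdsNE 0)).eventually
      (eventually_gt_nhds hd)
  obtain ⟨η, hη, hsub⟩ := mem_nhdsGT_iff_exists_Ioo_subset.mp
    (hslope.and (nhdsWithin_le_nhds hmax))
  have hη2 : η / 2 ∈ Ioo 0 η := ⟨half_pos hη, half_lt_self hη⟩
  obtain ⟨c, hc, hφc⟩ := exists_hasDerivAt_eq_slope φ φ' hη2.1
    (fun r _ => (hφ r).continuousAt.continuousWithinAt) fun r _ => hφ r
  have hc_pos : 0 < φ' c := by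
    have := (hsub ⟨hc.1, hc.2.trans hη2.2⟩).1
    rwa [slope_def_field, h0, sub_zero, sub_zero, div_pos_iff_of_pos_right hc.1] at this
  have hle : φ (η / 2) ≤ φ 0 := (hsub hη2).2
  rw [sub_zero, eq_div_iff hη2.1.ne'] at hφc
  nlinarith [hη2.1]

theorem inner_fderiv_fderiv_nonpos_of_isLocalMax_norm {E F : Type*} [NormedAddCommGroup E]
    [NormedSpace ℝ E] [NormedAddCommGroup F] [InnerProductSpace ℝ F] {u : E → F} {x₀ : E}
    (hu : ContDiff ℝ 2 u) (hmax : IsLocalMax (fun y => ‖u y‖) x₀) (e : E) :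
    ⟪u x₀, fderiv ℝ (fun y => fderiv ℝ u y e) x₀ e⟫ ≤ 0 := by
  set u' : E → F := fun y => fderiv ℝ u y e
  have hud : Differentiable ℝ u := hu.differentiable (by norm_num)
  have hu'd : Differentiable ℝ u' :=
    ((hu.fderiv_right (m := 1) (by norm_num)).clm_apply contDiff_const).differentiable one_ne_zero
  set c : ℝ → E := fun r => x₀ + r • e
  have hc0 : c 0 = x₀ := by simp [c]
  have hc : ∀ r, HasDerivAt c e r := fun r =>
    (((hasDerivAt_id r).smul_const e).const_add x₀).congr_deriv (one_smul ℝ e)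
  have hφ : ∀ r, HasDerivAt (fun r => ‖u (c r)‖ ^ 2) (2 * ⟪u (c r), u' (c r)⟫) r := fun r =>
    ((hud _).hasFDerivAt.comp_hasDerivAt r (hc r)).norm_sq
  have hφ' : HasDerivAt (fun r => 2 * ⟪u (c r), u' (c r)⟫)
      (2 * (⟪u x₀, fderiv ℝ u' x₀ e⟫ + ⟪u' x₀, u' x₀⟫)) 0 := by
    have hu_c := (hud (c 0)).hasFDerivAt.comp_hasDerivAt 0 (hc 0)
    have hu'_c := (hu'd (c 0)).hasFDerivAt.comp_hasDerivAt 0 (hc 0)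
    rw [hc0] at hu_c hu'_c
    exact ((hu_c.inner ℝ hu'_c).const_mul 2).congr_deriv
      (by simp only [Function.comp_apply, hc0, u'])
  have hmax_line : IsLocalMax (fun r => ‖u (c r)‖ ^ 2) 0 :=
    Eventually.mono ((hc0 ▸ hmax).comp_continuous (hc 0).continuousAt) fun r hr =>
      pow_le_pow_left₀ (norm_nonneg _) hr 2
  nlinarith [hmax_line.hasDerivAt_deriv_nonpos hφ hφ', real_inner_self_nonneg (x := u' x₀)]

theorem inner_lap_nonpos_of_isLocalMax_norm {u : E2 → E2} {x₀ : E2} (hu : ContDiff ℝ 2 u)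
    (hmax : IsLocalMax (fun y => ‖u y‖) x₀) : ⟪u x₀, lap u x₀⟫ ≤ 0 := by
  rw [lap, inner_sum]
  exact Finset.sum_nonpos fun i _ => inner_fderiv_fderiv_nonpos_of_isLocalMax_norm hu hmax _

theorem inner_diffusion_reaction_le {F : Type*} [NormedAddCommGroup F] [InnerProductSpace ℝ F]
    (ε : ℝ) {w L : F} (hL : ⟪w, L⟫ ≤ 0) (v f : F) :
    ⟪w, ε ^ 2 • L + (-(2 * ⟪v, w⟫) • v - ‖v‖ ^ 2 • w + f)⟫ ≤ ‖w‖ * ‖f‖ := by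
  simp only [inner_add_right, inner_sub_right, real_inner_smul_right, real_inner_comm w v,
    real_inner_self_eq_norm_sq]
  nlinarith [real_inner_le_norm w f, mul_nonneg (sq_nonneg ε) (neg_nonneg.2 hL),
    sq_nonneg ⟪w, v⟫, mul_nonneg (sq_nonneg ‖v‖) (sq_nonneg ‖w‖)]

theorem exists_first_le_of_lt {f g : ℝ → ℝ} {a b : ℝ} (hab : a ≤ b)
    (hf : ContinuousOn f (Icc a b)) (hg : ContinuousOn g (Icc a b)) (ha : f a < g a)
    (hb : g b ≤ f b) : ∃ c ∈ Ioc a b, g c ≤ f c ∧ ∀ s ∈ Ico a c, f s < g s := by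
  set S := {s ∈ Icc a b | g s ≤ f s}
  have hbdd : BddBelow S := ⟨a, fun s hs => hs.1.1⟩
  have hc : sInf S ∈ S := (isClosed_Icc.isClosed_le hg hf).csInf_mem ⟨b, ⟨hab, le_rfl⟩, hb⟩ hbdd
  refine ⟨sInf S, ⟨hc.1.1.lt_of_ne ?_, hc.1.2⟩, hc.2, fun s hs => ?_⟩
  · rintro hac
    exact (hac ▸ hc.2).not_gt ha
  · by_contra! hle
    exact hs.2.not_ge (csInf_le hbdd ⟨⟨hs.1, hs.2.le.trans hc.1.2⟩, hle⟩)

def HasLowerBarrierFromLeft (m : ℝ → ℝ) (t k : ℝ) : Prop :=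
  ∃ φ : ℝ → ℝ, ∃ φ' ≤ k, HasDerivAt φ φ' t ∧ φ t = m t ∧ ∀ s ∈ Ico 0 t, φ s ≤ m s

theorem lt_integral_add_mul_of_hasLowerBarrierFromLeft {m h : ℝ → ℝ}
    (hm : ContinuousOn m (Ici 0)) (hh : ContinuousOn h (Ici 0)) (hh0 : ∀ t ≥ 0, 0 ≤ h t)
    (hm0 : m 0 ≤ 0) (hbarrier : ∀ t > 0, 0 < m t → HasLowerBarrierFromLeft m t (h t))
    {δ : ℝ} (hδ : 0 < δ) {t : ℝ} (ht : 0 ≤ t) :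
    m t < (∫ s in (0:ℝ)..t, h s) + δ * (t + 1) := by
  set ψ : ℝ → ℝ := fun t => (∫ s in (0:ℝ)..t, h s) + δ * (t + 1)
  have hh_uIcc : ∀ t ≥ 0, ContinuousOn h (uIcc 0 t) := fun t ht =>
    hh.mono fun s hs => by rw [uIcc_of_le ht] at hs; exact hs.1
  have hψ_cont : ContinuousOn ψ (Icc 0 t) := by
    have hprim := intervalIntegral.continuousOn_primitive_interval (μ := volume)
      ((hh_uIcc t ht).integrableOn_compact isCompact_uIcc)
    rw [uIcc_of_le ht] at hprim
    exact hprim.add (continuous_const.mul (continuous_id.add continuous_const)).continuousOn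
  have hψ_ge : ∀ t ≥ 0, δ ≤ ψ t := fun t ht => by
    have := intervalIntegral.integral_nonneg (μ := volume) ht fun s hs => hh0 s hs.1
    nlinarith
  have hψ_deriv : ∀ t > 0, HasDerivAt ψ (h t + δ) t := fun t ht => by
    have hprim := intervalIntegral.integral_hasDerivAt_right (hh_uIcc t ht.le).intervalIntegrable
      ((hh.mono Ioi_subset_Ici_self).stronglyMeasurableAtFilter isOpen_Ioi t ht)
      ((hh t ht.le).continuousAt (Ici_mem_nhds ht))
    exact (hprim.add (((hasDerivAt_id' t).add_const 1).const_mul δ)).congr_deriv (by ring)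
  by_contra! hcross
  obtain ⟨t₀, ⟨ht₀, -⟩, hψm, hbelow⟩ := exists_first_le_of_lt ht (hm.mono Icc_subset_Ici_self)
    hψ_cont (by simpa [ψ] using hm0.trans_lt hδ) hcross
  obtain ⟨φ, φ', hφ'h, hφ, hφt₀, hφm⟩ :=
    hbarrier t₀ ht₀ (hδ.trans_le ((hψ_ge t₀ ht₀.le).trans hψm))
  have hmax : IsMaxOn (fun s => φ s - ψ s) (Icc 0 t₀) t₀ := by
    intro s hs
    show φ s - ψ s ≤ φ t₀ - ψ t₀
    rcases hs.2.lt_or_eq with hst | rfl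
    · linarith [hφm s ⟨hs.1, hst⟩, hbelow s ⟨hs.1, hst⟩]
    · exact le_rfl
  have := hmax.hasDerivAt_nonneg_of_right_endpoint ht₀ (hφ.sub (hψ_deriv t₀ ht₀))
  linarith

theorem le_integral_of_hasLowerBarrierFromLeft {m h : ℝ → ℝ}
    (hm : ContinuousOn m (Ici 0)) (hh : ContinuousOn h (Ici 0)) (hh0 : ∀ t ≥ 0, 0 ≤ h t)
    (hm0 : m 0 ≤ 0) (hbarrier : ∀ t > 0, 0 < m t → HasLowerBarrierFromLeft m t (h t)) :
    ∀ t ≥ 0, m t ≤ ∫ s in (0:ℝ)..t, h s := by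
  intro t ht
  refine le_of_forall_pos_lt_add fun ε hε => ?_
  have hδ : 0 < ε / (t + 1) := by positivity
  calc m t < (∫ s in (0:ℝ)..t, h s) + ε / (t + 1) * (t + 1) :=
        lt_integral_add_mul_of_hasLowerBarrierFromLeft hm hh hh0 hm0 hbarrier hδ ht
    _ = (∫ s in (0:ℝ)..t, h s) + ε := by rw [div_mul_cancel₀ _ (by positivity)]

theorem hasLowerBarrierFromLeft_iSup_norm (eps : ℝ) (v F w : ℝ → E2 → E2)
    (hFcont : ContinuousOn (fun p : ℝ × E2 => F p.1 p.2) (Ici 0 ×ˢ univ))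
    (hFper : ∀ t, IntPeriodic (F t)) (hwper : ∀ t, IntPeriodic (w t))
    (hwcont : ContinuousOn (fun p : ℝ × E2 => w p.1 p.2) (Ici 0 ×ˢ univ))
    (hwspace : ∀ t > (0:ℝ), ContDiff ℝ 2 (w t))
    (hpde : ∀ t > (0:ℝ), ∀ x, HasDerivAt (fun s => w s x)
      (eps ^ 2 • lap (w t) x + (-(2 * ⟪v t x, w t x⟫) • v t x - ‖v t x‖ ^ 2 • w t x + F t x)) t)
    {t : ℝ} (ht : 0 < t) (hwt : 0 < ⨆ x, ‖w t x‖) :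
    HasLowerBarrierFromLeft (fun t => ⨆ x, ‖w t x‖) t (⨆ x, ‖F t x‖) := by
  have hbdd : ∀ s ≥ 0, BddAbove (range fun x => ‖w s x‖) := fun s hs =>
    ((hwper s).comp norm).bddAbove_range (hwcont.continuous_slice hs).norm
  obtain ⟨x₀, hx₀⟩ := ((hwper t).comp norm).exists_forall_ge (hwcont.continuous_slice ht.le).norm
  have hsup : ⨆ x, ‖w t x‖ = ‖w t x₀‖ := (ciSup_le hx₀).antisymm (le_ciSup (hbdd t ht.le) x₀)
  have hne : w t x₀ ≠ 0 := norm_pos_iff.mp (hsup ▸ hwt)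
  refine ⟨fun s => ‖w s x₀‖, _, ?_, (hpde t ht x₀).norm hne, hsup.symm,
    fun s hs => le_ciSup (hbdd s hs.1) x₀⟩
  rw [div_le_iff₀ (norm_pos_iff.mpr hne)]
  calc _ ≤ ‖w t x₀‖ * ‖F t x₀‖ := inner_diffusion_reaction_le eps
        (inner_lap_nonpos_of_isLocalMax_norm (hwspace t ht) (.of_forall hx₀)) _ _
    _ ≤ ‖w t x₀‖ * ⨆ x, ‖F t x‖ := by
        gcongr
        exact le_ciSup (((hFper t).comp norm).bddAbove_range
          (hFcont.continuous_slice ht.le).norm) x₀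
    _ = _ := mul_comm _ _

theorem max_principle_bound_general (eps : ℝ) (v F w : ℝ → E2 → E2)
    (hFcont : ContinuousOn (fun p : ℝ × E2 => F p.1 p.2) (Set.Ici 0 ×ˢ Set.univ))
    (hFper : ∀ t x k, F t (x + intVec k) = F t x)
    (hwper : ∀ t x k, w t (x + intVec k) = w t x)
    (hwcont : ContinuousOn (fun p : ℝ × E2 => w p.1 p.2) (Set.Ici 0 ×ˢ Set.univ))
    (hwspace : ∀ t > (0:ℝ), ContDiff ℝ 2 (w t))
    (hpde : ∀ t > (0:ℝ), ∀ x, HasDerivAt (fun s => w s x)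
      (eps ^ 2 • lap (w t) x +
        (-(2 * (inner ℝ (v t x) (w t x) : ℝ)) • v t x
          - ‖v t x‖ ^ 2 • w t x + F t x)) t)
    (hinit : ∀ x, w 0 x = 0) :
    ∀ t ≥ (0:ℝ), (⨆ x, ‖w t x‖) ≤ ∫ s in (0:ℝ)..t, ⨆ x, ‖F s x‖ :=
  le_integral_of_hasLowerBarrierFromLeft (continuousOn_iSup_norm hwcont hwper)
    (continuousOn_iSup_norm hFcont hFper) (fun _ _ => Real.iSup_nonneg fun _ => norm_nonneg _)
    (by simp [hinit])
    fun _ ht hwt => hasLowerBarrierFromLeft_iSup_norm eps v F w hFcont hFper hwper hwcont hwspace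
      hpde ht hwt

/-- Lemma 2.1, maximum principle: if `w` solves
`∂ₜw - ε²Δw = -2(v·w)v - |v|²w + F` with `w(0,·) = 0`, then
`‖w(t)‖_∞ ≤ ∫₀ᵗ ‖F(s)‖_∞ ds`. -/
theorem max_principle_bound (eps : ℝ) (heps : 0 < eps) (v F w : ℝ → E2 → E2)
    (hvcont : ContinuousOn (fun p : ℝ × E2 => v p.1 p.2) (Set.Ici 0 ×ˢ Set.univ))
    (hvper : ∀ t x k, v t (x + intVec k) = v t x)
    (hFcont : ContinuousOn (fun p : ℝ × E2 => F p.1 p.2) (Set.Ici 0 ×ˢ Set.univ))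
    (hFper : ∀ t x k, F t (x + intVec k) = F t x)
    (hFbdd : ∃ B, ∀ t ≥ (0:ℝ), ∀ x, ‖F t x‖ ≤ B)
    (hwper : ∀ t x k, w t (x + intVec k) = w t x)
    (hwcont : ContinuousOn (fun p : ℝ × E2 => w p.1 p.2) (Set.Ici 0 ×ˢ Set.univ))
    (hwspace : ∀ t > (0:ℝ), ContDiff ℝ 2 (w t))
    (hpde : ∀ t > (0:ℝ), ∀ x, HasDerivAt (fun s => w s x)
      (eps ^ 2 • lap (w t) x +
        (-(2 * (inner ℝ (v t x) (w t x) : ℝ)) • v t x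
          - ‖v t x‖ ^ 2 • w t x + F t x)) t)
    (hinit : ∀ x, w 0 x = 0) :
    ∀ t ≥ (0:ℝ), (⨆ x, ‖w t x‖) ≤ ∫ s in (0:ℝ)..t, ⨆ x, ‖F s x‖ :=
  max_principle_bound_general eps v F w hFcont hFper hwper hwcont hwspace hpde hinit
end
end

section
/- Let c > 0 and let f, h : (0,∞) → (0,∞) be continuous functions such that limsup_{t→0⁺} f(t)/h(t) ≤ 1, such that s ↦ f(s)² is integrable on (0,t) for every t > 0, and such that f(t) ≤ c·∫₀ᵗ e^{t−s} f(s)² ds + h(t) for all t > 0. If T > 0 satisfies sup_{0<t<T} ∫₀ᵗ e^{t−s} (h(s)/h(t))·h(s) ds ≤ 1/(8c), then f(t) ≤ 2·h(t) for all t ∈ (0,T). -/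
open MeasureTheory Real Set Filter

private lemma auxA {c t : ℝ} (hc : 0 < c) (h : ℝ → ℝ) (hht : 0 < h t)
    (hT : ∫⁻ s in Set.Ioo (0:ℝ) t,
        ENNReal.ofReal (Real.exp (t - s) * (h s / h t) * h s)
      ≤ ENNReal.ofReal (1 / (8 * c))) :
    ∫⁻ s in Set.Ioo (0:ℝ) t, ENNReal.ofReal (Real.exp (t - s) * h s ^ 2)
      ≤ ENNReal.ofReal (h t / (8 * c)) := by
  set I := ∫⁻ s in Set.Ioo (0:ℝ) t, ENNReal.ofReal (Real.exp (t - s) * h s ^ 2) with hI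
  have key : ∀ s : ℝ, ENNReal.ofReal (Real.exp (t - s) * (h s / h t) * h s)
      = ENNReal.ofReal (Real.exp (t - s) * h s ^ 2) * ENNReal.ofReal (h t)⁻¹ := by
    intro s
    rw [← ENNReal.ofReal_mul (by positivity)]
    congr 1
    rw [div_eq_mul_inv]; ring
  have h2 : I * ENNReal.ofReal (h t)⁻¹ ≤ ENNReal.ofReal (1 / (8 * c)) := by
    rw [hI, ← lintegral_mul_const' _ _ ENNReal.ofReal_ne_top]
    simp_rw [← key]
    exact hT
  have h3 : I = I * ENNReal.ofReal (h t)⁻¹ * ENNReal.ofReal (h t) := by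
    rw [mul_assoc, ← ENNReal.ofReal_mul (by positivity), inv_mul_cancel₀ hht.ne',
      ENNReal.ofReal_one, mul_one]
  rw [h3]
  calc I * ENNReal.ofReal (h t)⁻¹ * ENNReal.ofReal (h t)
      ≤ ENNReal.ofReal (1 / (8 * c)) * ENNReal.ofReal (h t) := mul_le_mul_left h2 _
    _ = ENNReal.ofReal (h t / (8 * c)) := by
        rw [← ENNReal.ofReal_mul (by positivity)]; congr 1; ring

private lemma auxB {c t : ℝ} (hc : 0 < c) (h : ℝ → ℝ)
    (hcont : ContinuousOn h (Set.Ioi 0)) (hht : 0 < h t)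
    (hT : ∫⁻ s in Set.Ioo (0:ℝ) t,
        ENNReal.ofReal (Real.exp (t - s) * (h s / h t) * h s)
      ≤ ENNReal.ofReal (1 / (8 * c))) :
    IntegrableOn (fun s => Real.exp (t - s) * h s ^ 2) (Set.Ioo 0 t) ∧
      (∫ s in Set.Ioo (0:ℝ) t, Real.exp (t - s) * h s ^ 2) ≤ h t / (8 * c) := by
  have hmeas : AEStronglyMeasurable (fun s => Real.exp (t - s) * h s ^ 2)
      (volume.restrict (Set.Ioo 0 t)) :=
    (((Real.continuous_exp.comp (continuous_const.sub continuous_id)).continuousOn).mul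
      ((hcont.mono Set.Ioo_subset_Ioi_self).pow 2)).aestronglyMeasurable measurableSet_Ioo
  have hnn : 0 ≤ᵐ[volume.restrict (Set.Ioo (0:ℝ) t)] fun s => Real.exp (t - s) * h s ^ 2 :=
    Filter.Eventually.of_forall fun s => by positivity
  have hlt := auxA hc h hht hT
  have hfin : IntegrableOn (fun s => Real.exp (t - s) * h s ^ 2) (Set.Ioo 0 t) := by
    refine ⟨hmeas, ?_⟩
    rw [hasFiniteIntegral_iff_ofReal hnn]
    exact lt_of_le_of_lt hlt ENNReal.ofReal_lt_top
  refine ⟨hfin, ?_⟩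
  rw [integral_eq_lintegral_of_nonneg_ae hnn hmeas]
  exact ENNReal.toReal_le_of_le_ofReal (by positivity) hlt

private lemma auxC {c t : ℝ} (hc : 0 < c) (h : ℝ → ℝ)
    (hcont : ContinuousOn h (Set.Ioi 0)) (hht : 0 < h t)
    (hT : ∫⁻ s in Set.Ioo (0:ℝ) t,
        ENNReal.ofReal (Real.exp (t - s) * (h s / h t) * h s)
      ≤ ENNReal.ofReal (1 / (8 * c))) :
    IntegrableOn (fun s => h s ^ 2) (Set.Ioo 0 t) ∧
      (∫ s in Set.Ioo (0:ℝ) t, h s ^ 2) ≤ h t / (8 * c) := by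
  obtain ⟨hint, hbd⟩ := auxB hc h hcont hht hT
  have key : ∀ s ∈ Set.Ioo (0:ℝ) t, h s ^ 2 ≤ Real.exp (t - s) * h s ^ 2 := fun s hs =>
    le_mul_of_one_le_left (sq_nonneg _) (Real.one_le_exp (by linarith [hs.2]))
  have hint2 : IntegrableOn (fun s => h s ^ 2) (Set.Ioo 0 t) := by
    refine hint.mono' (((hcont.mono Set.Ioo_subset_Ioi_self).pow 2).aestronglyMeasurable
      measurableSet_Ioo) ?_
    refine (ae_restrict_iff' measurableSet_Ioo).2 (Filter.Eventually.of_forall fun s hs => ?_)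
    rw [Real.norm_eq_abs, abs_of_nonneg (sq_nonneg _)]
    exact key s hs
  exact ⟨hint2, le_trans (setIntegral_mono_on hint2 hint measurableSet_Ioo key) hbd⟩

set_option maxHeartbeats 1000000 in
/-- Lemma 2.2, a Gronwall-type inequality: if
`f(t) ≤ c ∫₀ᵗ e^{t-s} f(s)² ds + h(t)`, `limsup_{t→0⁺} f/h ≤ 1`, and
`∫₀ᵗ e^{t-s} (h(s)/h(t)) h(s) ds ≤ 1/(8c)` for all `0 < t < T`, then `f ≤ 2h` on `(0,T)`. -/
theorem gronwall_type (c : ℝ) (hc : 0 < c) (f h : ℝ → ℝ)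
    (hf_pos : ∀ t > (0:ℝ), 0 < f t) (hh_pos : ∀ t > (0:ℝ), 0 < h t)
    (hf_cont : ContinuousOn f (Set.Ioi 0)) (hh_cont : ContinuousOn h (Set.Ioi 0))
    (hlimsup : Filter.limsup (fun t => f t / h t) (nhdsWithin 0 (Set.Ioi 0)) ≤ 1)
    (hf_int : ∀ t > (0:ℝ), MeasureTheory.IntegrableOn (fun s => f s ^ 2) (Set.Ioo 0 t))
    (hineq : ∀ t > (0:ℝ),
      f t ≤ c * (∫ s in Set.Ioo 0 t, Real.exp (t - s) * f s ^ 2) + h t)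
    (T : ℝ) (hT : 0 < T)
    (hTcond : ∀ t ∈ Set.Ioo (0:ℝ) T,
      ∫⁻ s in Set.Ioo (0:ℝ) t,
          ENNReal.ofReal (Real.exp (t - s) * (h s / h t) * h s)
        ≤ ENNReal.ofReal (1 / (8 * c))) :
    ∀ t ∈ Set.Ioo (0:ℝ) T, f t ≤ 2 * h t := by
  -- integrability of f² on every Ioo 0 t
  have hfint' : ∀ t : ℝ, IntegrableOn (fun s => f s ^ 2) (Set.Ioo 0 t) := by
    intro t
    rcases le_or_gt t 0 with h' | h'
    · rw [Set.Ioo_eq_empty (not_lt.2 h')]; exact integrableOn_empty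
    · exact hf_int t h'
  -- integrability of exp-weighted f²
  have hexpf_int : ∀ t > (0:ℝ),
      IntegrableOn (fun s => Real.exp (t - s) * f s ^ 2) (Set.Ioo 0 t) := by
    intro t ht
    refine Integrable.mono' ((hf_int t ht).const_mul (Real.exp t)) ?_ ?_
    · exact (((Real.continuous_exp.comp (continuous_const.sub continuous_id)).continuousOn).mul
        ((hf_cont.mono Set.Ioo_subset_Ioi_self).pow 2)).aestronglyMeasurable measurableSet_Ioo
    · refine (ae_restrict_iff' measurableSet_Ioo).2 (Filter.Eventually.of_forall fun s hs => ?_)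
      rw [Real.norm_eq_abs, abs_of_nonneg (by positivity)]
      exact mul_le_mul_of_nonneg_right
        (Real.exp_le_exp.2 (show t - s ≤ t by linarith [hs.1])) (sq_nonneg _)
  -- basic consequence of hineq
  have hlemB : ∀ t > (0:ℝ),
      f t ≤ c * (Real.exp t * ∫ s in Set.Ioo (0:ℝ) t, f s ^ 2) + h t := by
    intro t ht
    have h1 := hineq t ht
    have h2 : (∫ s in Set.Ioo (0:ℝ) t, Real.exp (t - s) * f s ^ 2)
        ≤ ∫ s in Set.Ioo (0:ℝ) t, Real.exp t * f s ^ 2 := by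
      refine setIntegral_mono_on (hexpf_int t ht) ((hf_int t ht).const_mul _)
        measurableSet_Ioo fun s hs => ?_
      exact mul_le_mul_of_nonneg_right
        (Real.exp_le_exp.2 (by linarith [hs.1])) (sq_nonneg _)
    rw [integral_const_mul] at h2
    have h3 := mul_le_mul_of_nonneg_left h2 hc.le
    linarith
  intro t₀ ht₀
  by_contra hcon
  push_neg at hcon
  set B : Set ℝ := {t | t ∈ Set.Ioo (0:ℝ) T ∧ 2 * h t < f t} with hBdef
  have hBne : B.Nonempty := ⟨t₀, ht₀, hcon⟩
  have hBbdd : BddBelow B := ⟨0, fun x hx => hx.1.1.le⟩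
  set m := sInf B with hmdef
  have hm0 : 0 ≤ m := le_csInf hBne fun x hx => hx.1.1.le
  have hmT : m < T := lt_of_le_of_lt (csInf_le hBbdd ⟨ht₀, hcon⟩) ht₀.2
  have hnotB : ∀ s : ℝ, 0 < s → s < m → f s ≤ 2 * h s := by
    intro s hs0 hsm
    by_contra hsf
    push_neg at hsf
    have : m ≤ s := csInf_le hBbdd ⟨⟨hs0, hsm.trans hmT⟩, hsf⟩
    linarith
  rcases hm0.eq_or_lt with hmz | hmz
  · -- m = 0 : bootstrap argument near 0
    set τ : ℝ := min 1 (T / 2) with hτdef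
    have hτ0 : 0 < τ := lt_min one_pos (by linarith)
    have hτ1 : τ ≤ 1 := min_le_left _ _
    have hτT : τ < T := lt_of_le_of_lt (min_le_right _ _) (by linarith)
    set F : ℝ → ℝ := fun t => ∫ s in Set.Ioo (0:ℝ) t, f s ^ 2 with hFdef
    have hFapp : ∀ t : ℝ, F t = ∫ s in Set.Ioo (0:ℝ) t, f s ^ 2 := fun t => rfl
    have hF_nonneg : ∀ t, 0 ≤ F t := fun t =>
      setIntegral_nonneg measurableSet_Ioo fun s _ => sq_nonneg _
    have hF_mono : Monotone F := fun a b hab =>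
      setIntegral_mono_set (hfint' b) (Filter.Eventually.of_forall fun s => sq_nonneg _)
        ((Set.Ioo_subset_Ioo_right hab).eventuallyLE)
    have hhint : ∀ u : ℝ, 0 < u → u ≤ τ →
        IntegrableOn (fun s => h s ^ 2) (Set.Ioo 0 u) ∧
          (∫ s in Set.Ioo (0:ℝ) u, h s ^ 2) ≤ h u / (8 * c) := fun u hu0 huτ =>
      auxC hc h hh_cont (hh_pos u hu0) (hTcond u ⟨hu0, lt_of_le_of_lt huτ hτT⟩)
    have hhint' : ∀ u : ℝ, u ≤ τ → IntegrableOn (fun s => h s ^ 2) (Set.Ioo 0 u) := by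
      intro u huτ
      rcases le_or_gt u 0 with h' | h'
      · rw [Set.Ioo_eq_empty (not_lt.2 h')]; exact integrableOn_empty
      · exact (hhint u h' huτ).1
    set G : ℝ → ℝ := fun t => ∫ s in Set.Ioo (0:ℝ) (min t τ), h s ^ 2 with hGdef
    have hGapp : ∀ t : ℝ, t ≤ τ → G t = ∫ s in Set.Ioo (0:ℝ) t, h s ^ 2 := by
      intro t htτ
      simp only [hGdef, min_eq_left htτ]
    have hG_nonneg : ∀ t, 0 ≤ G t := fun t =>
      setIntegral_nonneg measurableSet_Ioo fun s _ => sq_nonneg _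
    have hG_mono : Monotone G := fun a b hab =>
      setIntegral_mono_set (hhint' _ (min_le_right _ _))
        (Filter.Eventually.of_forall fun s => sq_nonneg _)
        ((Set.Ioo_subset_Ioo_right (min_le_min_right _ hab)).eventuallyLE)
    have hG_bd : ∀ t, G t ≤ G τ := by
      intro t
      rw [hGapp τ le_rfl]
      exact setIntegral_mono_set (hhint' τ le_rfl)
        (Filter.Eventually.of_forall fun s => sq_nonneg _)
        ((Set.Ioo_subset_Ioo_right (min_le_right _ _)).eventuallyLE)
    set K : ℝ := 2 * c * Real.exp 1 with hKdef
    have hK : 0 < K := by rw [hKdef]; positivity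
    have hFτ1 : (0:ℝ) < F τ + 1 := by linarith [hF_nonneg τ]
    have hGτ1 : (0:ℝ) < G τ + 1 := by linarith [hG_nonneg τ]
    have hA1 : (0:ℝ) < 2 * K ^ 2 * (F τ + 1) := by positivity
    have hA2 : (0:ℝ) < 64 * K ^ 2 * (G τ + 1) := by positivity
    set ε : ℝ := min (min τ (1/3)) (min (1 / (2 * K ^ 2 * (F τ + 1)))
      (1 / (64 * K ^ 2 * (G τ + 1)))) with hεdef
    have hε0 : 0 < ε := lt_min (lt_min hτ0 (by norm_num))
      (lt_min (by positivity) (by positivity))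
    have hετ : ε ≤ τ := (min_le_left _ _).trans (min_le_left _ _)
    have hε13 : ε ≤ 1/3 := (min_le_left _ _).trans (min_le_right _ _)
    have hεF : K ^ 2 * F τ * ε ≤ 1 / 2 := by
      have h1 : ε ≤ 1 / (2 * K ^ 2 * (F τ + 1)) := (min_le_right _ _).trans (min_le_left _ _)
      have h2 : K ^ 2 * (F τ + 1) * ε ≤ K ^ 2 * (F τ + 1) * (1 / (2 * K ^ 2 * (F τ + 1))) :=
        mul_le_mul_of_nonneg_left h1 (by positivity)
      have h3 : K ^ 2 * (F τ + 1) * (1 / (2 * K ^ 2 * (F τ + 1))) = 1 / 2 := by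
        field_simp
      nlinarith [sq_nonneg K, hε0.le]
    have hεG : 64 * K ^ 2 * G τ * ε ≤ 1 := by
      have h1 : ε ≤ 1 / (64 * K ^ 2 * (G τ + 1)) := (min_le_right _ _).trans (min_le_right _ _)
      have h2 : 64 * K ^ 2 * (G τ + 1) * ε ≤ 64 * K ^ 2 * (G τ + 1) *
          (1 / (64 * K ^ 2 * (G τ + 1))) := mul_le_mul_of_nonneg_left h1 (by positivity)
      have h3 : 64 * K ^ 2 * (G τ + 1) * (1 / (64 * K ^ 2 * (G τ + 1))) = 1 := by
        field_simp
      nlinarith [sq_nonneg K, hε0.le]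
    -- integrability of F² and G²
    have hFsq_int : ∀ t : ℝ, 0 < t → t ≤ τ →
        IntegrableOn (fun s => F s ^ 2) (Set.Ioo 0 t) := by
      intro t ht0 htτ
      refine Integrable.mono'
        (integrableOn_const (C := F τ ^ 2) measure_Ioo_lt_top.ne)
        ((hF_mono.measurable.pow_const 2).aestronglyMeasurable) ?_
      refine (ae_restrict_iff' measurableSet_Ioo).2 (Filter.Eventually.of_forall fun s hs => ?_)
      rw [Real.norm_eq_abs, abs_of_nonneg (sq_nonneg _)]
      exact pow_le_pow_left₀ (hF_nonneg s) (hF_mono (hs.2.le.trans htτ)) 2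
    have hGsq_int : ∀ t : ℝ, 0 < t →
        IntegrableOn (fun s => G s ^ 2) (Set.Ioo 0 t) := by
      intro t ht0
      refine Integrable.mono'
        (integrableOn_const (C := G τ ^ 2) measure_Ioo_lt_top.ne)
        ((hG_mono.measurable.pow_const 2).aestronglyMeasurable) ?_
      refine (ae_restrict_iff' measurableSet_Ioo).2 (Filter.Eventually.of_forall fun s hs => ?_)
      rw [Real.norm_eq_abs, abs_of_nonneg (sq_nonneg _)]
      exact pow_le_pow_left₀ (hG_nonneg s) (hG_bd s) 2
    -- pointwise bound
    have hpt : ∀ t ∈ Set.Ioo (0:ℝ) ε, f t ^ 2 ≤ 4 * h t ^ 2 + K ^ 2 * F t ^ 2 := by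
      intro t ht
      have ht0 := ht.1
      have hf0 := (hf_pos t ht0).le
      rcases le_or_gt (f t) (2 * h t) with hle | hgt
      · nlinarith [sq_nonneg (K * F t), mul_pow K (F t) 2]
      · have hB := hlemB t ht0
        rw [← hFapp t] at hB
        have ht1 : t ≤ 1 := by linarith [ht.2, hε13]
        have hexp : Real.exp t ≤ Real.exp 1 := Real.exp_le_exp.2 ht1
        have h1 : c * (Real.exp t * F t) ≤ c * (Real.exp 1 * F t) :=
          mul_le_mul_of_nonneg_left
            (mul_le_mul_of_nonneg_right hexp (hF_nonneg t)) hc.le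
        have hfK : f t ≤ K * F t := by rw [hKdef]; linarith
        have hsq : f t ^ 2 ≤ (K * F t) ^ 2 := pow_le_pow_left₀ hf0 hfK 2
        rw [mul_pow] at hsq
        linarith [sq_nonneg (h t)]
    -- integrated bound
    have hFle : ∀ t ∈ Set.Ioo (0:ℝ) ε,
        F t ≤ 4 * G t + K ^ 2 * ∫ s in Set.Ioo (0:ℝ) t, F s ^ 2 := by
      intro t ht
      have htτ : t ≤ τ := ht.2.le.trans hετ
      have hint1 := (hhint' t htτ).const_mul (4:ℝ)
      have hint2 := (hFsq_int t ht.1 htτ).const_mul (K ^ 2)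
      have hmono2 : F t ≤ ∫ s in Set.Ioo (0:ℝ) t, (4 * h s ^ 2 + K ^ 2 * F s ^ 2) := by
        rw [hFapp t]
        refine setIntegral_mono_on (hfint' t) (hint1.add hint2)
          measurableSet_Ioo fun s hs => ?_
        exact hpt s ⟨hs.1, hs.2.trans ht.2⟩
      rw [integral_add hint1 hint2, integral_const_mul, integral_const_mul,
        ← hGapp t htτ] at hmono2
      exact hmono2
    -- absorption estimates
    have habsF : ∀ t ∈ Set.Ioo (0:ℝ) ε,
        (∫ s in Set.Ioo (0:ℝ) t, F s ^ 2) ≤ F τ * F t * t := by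
      intro t ht
      have htτ : t ≤ τ := ht.2.le.trans hετ
      have h1 : (∫ s in Set.Ioo (0:ℝ) t, F s ^ 2)
          ≤ ∫ _s in Set.Ioo (0:ℝ) t, F τ * F t := by
        refine setIntegral_mono_on (hFsq_int t ht.1 htτ)
          (integrableOn_const (C := F τ * F t) measure_Ioo_lt_top.ne)
          measurableSet_Ioo fun s hs => ?_
        have h2 : F s ≤ F τ := hF_mono (hs.2.le.trans htτ)
        have h3 : F s ≤ F t := hF_mono hs.2.le
        nlinarith [hF_nonneg s]
      rw [setIntegral_const, Real.volume_real_Ioo, smul_eq_mul,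
        max_eq_left (by linarith [ht.1] : (0:ℝ) ≤ t - 0)] at h1
      nlinarith [h1]
    have habsG : ∀ t ∈ Set.Ioo (0:ℝ) ε,
        (∫ s in Set.Ioo (0:ℝ) t, G s ^ 2) ≤ G τ * G t * t := by
      intro t ht
      have h1 : (∫ s in Set.Ioo (0:ℝ) t, G s ^ 2)
          ≤ ∫ _s in Set.Ioo (0:ℝ) t, G τ * G t := by
        refine setIntegral_mono_on (hGsq_int t ht.1)
          (integrableOn_const (C := G τ * G t) measure_Ioo_lt_top.ne)
          measurableSet_Ioo fun s hs => ?_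
        have h2 : G s ≤ G τ := hG_bd s
        have h3 : G s ≤ G t := hG_mono hs.2.le
        nlinarith [hG_nonneg s]
      rw [setIntegral_const, Real.volume_real_Ioo, smul_eq_mul,
        max_eq_left (by linarith [ht.1] : (0:ℝ) ≤ t - 0)] at h1
      nlinarith [h1]
    -- first pass : F ≤ 8 G
    have hF8G : ∀ t ∈ Set.Ioo (0:ℝ) ε, F t ≤ 8 * G t := by
      intro t ht
      have h1 := hFle t ht
      have h2 := habsF t ht
      have h4 : K ^ 2 * F τ * t ≤ K ^ 2 * F τ * ε := by
        have := mul_le_mul_of_nonneg_left ht.2.le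
          (mul_nonneg (sq_nonneg K) (hF_nonneg τ))
        linarith [this]
      have h5 := mul_le_mul_of_nonneg_right (h4.trans hεF) (hF_nonneg t)
      have h6 := mul_le_mul_of_nonneg_left h2 (sq_nonneg K)
      nlinarith [h1, h5, h6]
    -- second pass : F ≤ 5 G
    have hF5G : ∀ t ∈ Set.Ioo (0:ℝ) ε, F t ≤ 5 * G t := by
      intro t ht
      have htτ : t ≤ τ := ht.2.le.trans hετ
      have h1 := hFle t ht
      have hint64 : (∫ s in Set.Ioo (0:ℝ) t, F s ^ 2)
          ≤ ∫ s in Set.Ioo (0:ℝ) t, 64 * G s ^ 2 := by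
        refine setIntegral_mono_on (hFsq_int t ht.1 htτ)
          ((hGsq_int t ht.1).const_mul 64) measurableSet_Ioo fun s hs => ?_
        have h8 := hF8G s ⟨hs.1, hs.2.trans ht.2⟩
        nlinarith [hF_nonneg s, hG_nonneg s]
      rw [integral_const_mul] at hint64
      have h2 := habsG t ht
      have h4 : 64 * K ^ 2 * G τ * t ≤ 64 * K ^ 2 * G τ * ε := by
        have := mul_le_mul_of_nonneg_left ht.2.le
          (by positivity : (0:ℝ) ≤ 64 * K ^ 2 * G τ)
        linarith [this]
      have e1 := mul_le_mul_of_nonneg_left hint64 (sq_nonneg K)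
      have e2 := mul_le_mul_of_nonneg_left h2 (by positivity : (0:ℝ) ≤ 64 * K ^ 2)
      have e3 := mul_le_mul_of_nonneg_right (h4.trans hεG) (hG_nonneg t)
      nlinarith [h1, e1, e2, e3]
    -- final contradiction
    obtain ⟨b, hbB, hbε⟩ := exists_lt_of_csInf_lt hBne (show m < ε by rw [← hmz]; exact hε0)
    have hb0 : 0 < b := hbB.1.1
    have hbf : 2 * h b < f b := hbB.2
    have hbτ : b ≤ τ := hbε.le.trans hετ
    have hB5 := hF5G b ⟨hb0, hbε⟩
    have hlem := hlemB b hb0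
    rw [← hFapp b] at hlem
    have hGb : G b ≤ h b / (8 * c) := by rw [hGapp b hbτ]; exact (hhint b hb0 hbτ).2
    have hexpb : Real.exp b ≤ Real.exp (1/3 : ℝ) := Real.exp_le_exp.2 (by linarith)
    have hexp13 : Real.exp (1/3 : ℝ) < 8/5 := by
      by_contra hcon'
      push_neg at hcon'
      have h3 : (8/5 : ℝ) ^ (3:ℕ) ≤ Real.exp (1/3 : ℝ) ^ (3:ℕ) :=
        pow_le_pow_left₀ (by norm_num) hcon' 3
      rw [← Real.exp_nat_mul] at h3
      norm_num at h3
      linarith [Real.exp_one_lt_d9]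
    have hhb := hh_pos b hb0
    have hkey : h b < c * (Real.exp b * F b) := by linarith
    have e1 : c * (Real.exp b * F b) ≤ c * (Real.exp b * (5 * G b)) :=
      mul_le_mul_of_nonneg_left (mul_le_mul_of_nonneg_left hB5 (Real.exp_pos b).le) hc.le
    have e2 : c * (Real.exp b * (5 * G b)) ≤ c * (Real.exp b * (5 * (h b / (8 * c)))) := by
      have h5G : (5:ℝ) * G b ≤ 5 * (h b / (8 * c)) := by linarith
      exact mul_le_mul_of_nonneg_left
        (mul_le_mul_of_nonneg_left h5G (Real.exp_pos b).le) hc.le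
    have e3 : c * (Real.exp b * (5 * (h b / (8 * c)))) = (5/8) * (Real.exp b * h b) := by
      field_simp
    have e4 : (5/8 : ℝ) * (Real.exp b * h b) ≤ (5/8) * (Real.exp (1/3 : ℝ) * h b) := by
      have := mul_le_mul_of_nonneg_right hexpb hhb.le
      linarith
    have e5 : (5/8 : ℝ) * (Real.exp (1/3 : ℝ) * h b) < (5/8) * ((8/5) * h b) := by
      have := mul_lt_mul_of_pos_right hexp13 hhb
      linarith
    linarith [hkey, e1, e2, e3, e4, e5]
  · -- m > 0 : first-crossing argument
    have hmIoo : m ∈ Set.Ioo (0:ℝ) T := ⟨hmz, hmT⟩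
    have hφ : ContinuousAt (fun x => f x - 2 * h x) m :=
      (hf_cont.sub (continuousOn_const.mul hh_cont)).continuousAt (Ioi_mem_nhds hmz)
    have hfm : 2 * h m ≤ f m := by
      by_contra hlt
      push_neg at hlt
      have hev := hφ (Iio_mem_nhds (show f m - 2 * h m < 0 by linarith))
      rcases Metric.mem_nhds_iff.1 hev with ⟨δ, hδ, hball⟩
      obtain ⟨b, hbB, hbδ⟩ := exists_lt_of_csInf_lt hBne (lt_add_of_pos_right m hδ)
      have hmb : m ≤ b := csInf_le hBbdd hbB
      have hmem : b ∈ Metric.ball m δ := by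
        rw [Metric.mem_ball, Real.dist_eq, abs_of_nonneg (by linarith)]
        linarith
      have hb1 : f b - 2 * h b < 0 := hball hmem
      have hb2 := hbB.2
      linarith
    obtain ⟨hgint, hgbd⟩ := auxB hc h hh_cont (hh_pos m hmz) (hTcond m hmIoo)
    have hmono : (∫ s in Set.Ioo (0:ℝ) m, Real.exp (m - s) * f s ^ 2)
        ≤ ∫ s in Set.Ioo (0:ℝ) m, 4 * (Real.exp (m - s) * h s ^ 2) := by
      refine setIntegral_mono_on (hexpf_int m hmz) (hgint.const_mul 4)
        measurableSet_Ioo fun s hs => ?_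
      have hfs := hnotB s hs.1 hs.2
      have hfs0 := (hf_pos s hs.1).le
      have hsq : f s ^ 2 ≤ 4 * h s ^ 2 := by nlinarith
      calc Real.exp (m - s) * f s ^ 2 ≤ Real.exp (m - s) * (4 * h s ^ 2) :=
            mul_le_mul_of_nonneg_left hsq (Real.exp_pos _).le
        _ = 4 * (Real.exp (m - s) * h s ^ 2) := by ring
    rw [integral_const_mul] at hmono
    have h1 := hineq m hmz
    have hhm := hh_pos m hmz
    have h4 : (∫ s in Set.Ioo (0:ℝ) m, Real.exp (m - s) * f s ^ 2)
        ≤ 4 * (h m / (8 * c)) := hmono.trans (by linarith)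
    have h5 := mul_le_mul_of_nonneg_left h4 hc.le
    have h6 : c * (4 * (h m / (8 * c))) = h m / 2 := by field_simp; ring
    linarith
end

section
/- Let c > 0 and let f, h : (0,∞) → (0,∞) be continuous functions such that limsup_{t→0⁺} f(t)/h(t) ≤ 1, such that s ↦ f(s)² is integrable on (0,t) for every t > 0, and such that f(t) ≤ c·∫₀ᵗ e^{t−s} f(s)² ds + h(t) for all t > 0. If, in addition, h is nondecreasing and T > 0 satisfies ∫₀ᵀ e^{T−s} h(s) ds ≤ 1/(8c), then f(t) ≤ 2·h(t) for all t ∈ (0,T). -/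
open MeasureTheory Real Set Filter

lemma gb_le {δ K ε x : ℝ} (hK : 0 ≤ K) (hε : 0 ≤ ε) (hx : 0 ≤ x) :
    gronwallBound δ K ε x ≤ (δ + ε * x) * Real.exp (K * x) := by
  rcases eq_or_lt_of_le hK with hK0 | hK0
  · rw [← hK0, gronwallBound_K0]
    simp only [zero_mul, Real.exp_zero, mul_one, le_refl]
  · rw [gronwallBound_of_K_ne_0 (ne_of_gt hK0)]
    have hid : Real.exp (-(K * x)) * Real.exp (K * x) = 1 := by
      rw [← Real.exp_add]; simp
    have h1 : Real.exp (K * x) - 1 ≤ K * x * Real.exp (K * x) := by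
      nlinarith [Real.add_one_le_exp (-(K * x)), Real.exp_pos (K * x)]
    have h2 : ε / K * (Real.exp (K * x) - 1) ≤ ε * x * Real.exp (K * x) := by
      rw [div_mul_eq_mul_div, div_le_iff₀ hK0]
      nlinarith
    nlinarith

open scoped Topology in
set_option maxHeartbeats 4000000 in
/-- Lemma 2.2, second form: under the same hypotheses as the
Gronwall-type lemma, if in addition `h` is nondecreasing on `(0,∞)` and
`∫₀ᵀ e^{T-s} h(s) ds ≤ 1/(8c)`, then `f ≤ 2h` on `(0,T)`. -/
theorem gronwall_type_monotone (c : ℝ) (hc : 0 < c) (f h : ℝ → ℝ)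
    (hf_pos : ∀ t > (0:ℝ), 0 < f t) (hh_pos : ∀ t > (0:ℝ), 0 < h t)
    (hf_cont : ContinuousOn f (Set.Ioi 0)) (hh_cont : ContinuousOn h (Set.Ioi 0))
    (hlimsup : Filter.limsup (fun t => f t / h t) (nhdsWithin 0 (Set.Ioi 0)) ≤ 1)
    (hf_int : ∀ t > (0:ℝ), MeasureTheory.IntegrableOn (fun s => f s ^ 2) (Set.Ioo 0 t))
    (hineq : ∀ t > (0:ℝ),
      f t ≤ c * (∫ s in Set.Ioo 0 t, Real.exp (t - s) * f s ^ 2) + h t)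
    (hmono : ∀ s t : ℝ, 0 < s → s ≤ t → h s ≤ h t)
    (T : ℝ) (hT : 0 < T)
    (hTcond : ∫⁻ s in Set.Ioo (0:ℝ) T,
        ENNReal.ofReal (Real.exp (T - s) * h s) ≤ ENNReal.ofReal (1 / (8 * c))) :
    ∀ t ∈ Set.Ioo (0:ℝ) T, f t ≤ 2 * h t := by
  set g : ℝ → ℝ := fun s => Real.exp (-s) * f s ^ 2 with hg_def
  have hg_nonneg : ∀ s, 0 ≤ g s := fun s => mul_nonneg (Real.exp_nonneg _) (sq_nonneg _)
  have hg_cont : ContinuousOn g (Ioi 0) :=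
    ((Real.continuous_exp.comp continuous_neg).continuousOn).mul (hf_cont.pow 2)
  have hg_int : ∀ t, 0 < t → IntegrableOn g (Ioo 0 t) := by
    intro t ht
    refine Integrable.mono (hf_int t ht)
      ((hg_cont.mono Ioo_subset_Ioi_self).aestronglyMeasurable measurableSet_Ioo) ?_
    filter_upwards [ae_restrict_mem measurableSet_Ioo] with s hs
    rw [Real.norm_of_nonneg (hg_nonneg s), Real.norm_of_nonneg (sq_nonneg _)]
    have he1 : Real.exp (-s) ≤ 1 := Real.exp_le_one_iff.mpr (by linarith [hs.1])
    simp only [hg_def]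
    nlinarith [mul_le_mul_of_nonneg_right he1 (sq_nonneg (f s))]
  have hg_int' : ∀ t, 0 < t → IntegrableOn g (Icc 0 t) := fun t ht =>
    (hg_int t ht).congr_set_ae Ioo_ae_eq_Icc.symm
  set F : ℝ → ℝ := fun x => ∫ s in Ioc 0 x, g s with hF_def
  have hF0 : F 0 = 0 := by simp [hF_def]
  have hF_cont : ContinuousOn F (Icc 0 T) := intervalIntegral.continuousOn_primitive (hg_int' T hT)
  have hF_nonneg : ∀ x, 0 ≤ F x := fun x =>
    setIntegral_nonneg measurableSet_Ioc fun s _ => hg_nonneg s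
  have hF_mono : ∀ x y, 0 < y → x ≤ y → F x ≤ F y := by
    intro x y hy hxy
    refine setIntegral_mono_set ((hg_int' y hy).mono_set Ioc_subset_Icc_self)
      (Eventually.of_forall fun s => hg_nonneg s) ?_
    exact HasSubset.Subset.eventuallyLE (Ioc_subset_Ioc_right hxy)
  have hF_le : ∀ x, 0 < x → f x ≤ c * (Real.exp x * F x) + h x := by
    intro x hx
    have h0 := hineq x hx
    have heq : (∫ s in Ioo 0 x, Real.exp (x - s) * f s ^ 2) = Real.exp x * F x := by
      rw [show F x = ∫ s in Ioo 0 x, g s from integral_Ioc_eq_integral_Ioo, ← integral_const_mul]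
      refine integral_congr_ae (Eventually.of_forall fun s => ?_)
      simp only [hg_def, Real.exp_sub, Real.exp_neg, div_eq_mul_inv]
      ring
    rw [heq] at h0
    exact h0
  have hF_deriv : ∀ x, 0 < x → HasDerivAt F (g x) x := by
    intro x hx
    have hP : HasDerivAt (fun u => ∫ s in (0:ℝ)..u, g s) (g x) x := by
      refine intervalIntegral.integral_hasDerivAt_right ?_ ?_ ?_
      · exact ((hg_int' x hx).mono_set (by rw [uIcc_of_le hx.le])).intervalIntegrable
      · exact hg_cont.stronglyMeasurableAtFilter isOpen_Ioi x hx
      · exact hg_cont.continuousAt (isOpen_Ioi.mem_nhds hx)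
    refine hP.congr_of_eventuallyEq ?_
    filter_upwards [isOpen_Ioi.mem_nhds hx] with u (hu : (0:ℝ) < u)
    rw [intervalIntegral.integral_of_le hu.le]
  set K : ℝ := F T with hK_def
  have hK0 : 0 ≤ K := hF_nonneg T
  set L : ℝ := 2 * c ^ 2 * Real.exp T * K with hL_def
  have hL0 : 0 ≤ L := mul_nonneg (by positivity) hK0
  -- Gronwall step
  have key : ∀ b, 0 < b → b ≤ T → F b ≤ 2 * h b ^ 2 * b * Real.exp (L * T) := by
    intro b hb hbT
    have hbnd : ∀ a ∈ Ioo (0:ℝ) b, F b ≤ (F a + 2 * h b ^ 2 * b) * Real.exp (L * T) := by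
      intro a ha
      have hsubI : Icc a b ⊆ Icc 0 T := Icc_subset_Icc ha.1.le hbT
      have bound : ∀ x ∈ Ico a b, ‖g x‖ ≤ L * ‖F x‖ + 2 * h b ^ 2 := by
        intro x hx
        have hx0 : 0 < x := lt_of_lt_of_le ha.1 hx.1
        rw [Real.norm_of_nonneg (hg_nonneg x), Real.norm_of_nonneg (hF_nonneg x)]
        have hfx := hF_le x hx0
        have hFK : F x ≤ K := hF_mono x T hT (le_trans hx.2.le hbT)
        have hhb : h x ≤ h b := hmono x b hx0 hx.2.le
        have hhx := hh_pos x hx0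
        have hexT : Real.exp x ≤ Real.exp T := Real.exp_le_exp.mpr (le_trans hx.2.le hbT)
        have hex1 : Real.exp (-x) ≤ 1 := Real.exp_le_one_iff.mpr (by linarith)
        have hid : Real.exp (-x) * Real.exp x = 1 := by rw [← Real.exp_add]; simp
        set A : ℝ := c * (Real.exp x * F x) with hA_def
        have hA0 : 0 ≤ A := mul_nonneg hc.le (mul_nonneg (Real.exp_nonneg _) (hF_nonneg x))
        have h1 : f x ^ 2 ≤ (A + h x) ^ 2 := by nlinarith [hf_pos x hx0]
        have s1 : Real.exp (-x) * f x ^ 2 ≤ Real.exp (-x) * (A + h x) ^ 2 :=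
          mul_le_mul_of_nonneg_left h1 (Real.exp_nonneg _)
        have s2 : Real.exp (-x) * (A + h x) ^ 2 ≤
            2 * Real.exp (-x) * A ^ 2 + 2 * Real.exp (-x) * h x ^ 2 := by
          nlinarith [mul_nonneg (Real.exp_nonneg (-x)) (sq_nonneg (A - h x))]
        have s3 : 2 * Real.exp (-x) * A ^ 2 = 2 * c ^ 2 * Real.exp x * F x ^ 2 := by
          rw [hA_def]
          linear_combination (2 * c ^ 2 * Real.exp x * F x ^ 2) * hid
        have hm : Real.exp x * F x * F x ≤ Real.exp T * K * F x := by
          nlinarith [mul_le_mul hexT hFK (hF_nonneg x) (Real.exp_nonneg T), hF_nonneg x]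
        have s4 : 2 * c ^ 2 * Real.exp x * F x ^ 2 ≤ L * F x := by
          have := mul_le_mul_of_nonneg_left hm (by positivity : (0:ℝ) ≤ 2 * c ^ 2)
          rw [hL_def]; nlinarith
        have s5 : 2 * Real.exp (-x) * h x ^ 2 ≤ 2 * h b ^ 2 := by
          have hb2 : h x ^ 2 ≤ h b ^ 2 := by nlinarith
          nlinarith [mul_nonneg (sub_nonneg.mpr hex1) (sq_nonneg (h x)), sq_nonneg (h x)]
        calc g x = Real.exp (-x) * f x ^ 2 := rfl
          _ ≤ 2 * Real.exp (-x) * A ^ 2 + 2 * Real.exp (-x) * h x ^ 2 := by linarith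
          _ ≤ L * F x + 2 * h b ^ 2 := by linarith [s3, s4, s5]
      have hGr := norm_le_gronwallBound_of_norm_deriv_right_le (hF_cont.mono hsubI)
        (fun x hx => (hF_deriv x (lt_of_lt_of_le ha.1 hx.1)).hasDerivWithinAt)
        (le_refl ‖F a‖) bound b (right_mem_Icc.mpr ha.2.le)
      rw [Real.norm_of_nonneg (hF_nonneg b), Real.norm_of_nonneg (hF_nonneg a)] at hGr
      have hε0 : (0:ℝ) ≤ 2 * h b ^ 2 := by positivity
      have hgb := gb_le (δ := F a) hL0 hε0 (sub_nonneg.mpr ha.2.le)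
      have hbase : F a + 2 * h b ^ 2 * (b - a) ≤ F a + 2 * h b ^ 2 * b := by
        nlinarith [ha.1.le]
      have hexp : Real.exp (L * (b - a)) ≤ Real.exp (L * T) := by
        apply Real.exp_le_exp.mpr
        nlinarith [ha.1.le, hbT]
      have hbase0 : 0 ≤ F a + 2 * h b ^ 2 * (b - a) := by
        have := hF_nonneg a
        nlinarith [ha.1.le, ha.2.le]
      calc F b ≤ gronwallBound (F a) L (2 * h b ^ 2) (b - a) := hGr
        _ ≤ (F a + 2 * h b ^ 2 * (b - a)) * Real.exp (L * (b - a)) := hgb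
        _ ≤ (F a + 2 * h b ^ 2 * b) * Real.exp (L * T) := by
            apply mul_le_mul hbase hexp (Real.exp_nonneg _)
            nlinarith [hF_nonneg a, sq_nonneg (h b)]
    -- limit as a → 0⁺
    have hFt0 : Tendsto F (𝓝[Ioo 0 b] 0) (𝓝 0) := by
      have h1 : ContinuousWithinAt F (Icc 0 T) 0 := hF_cont 0 (left_mem_Icc.mpr hT.le)
      have h2 := h1.tendsto
      rw [hF0] at h2
      exact h2.mono_left (nhdsWithin_mono 0 fun x hx => ⟨hx.1.le, le_trans hx.2.le hbT⟩)
    haveI := left_nhdsWithin_Ioo_neBot hb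
    have hlim : Tendsto (fun a => (F a + 2 * h b ^ 2 * b) * Real.exp (L * T)) (𝓝[Ioo 0 b] 0)
        (𝓝 ((0 + 2 * h b ^ 2 * b) * Real.exp (L * T))) :=
      (hFt0.add tendsto_const_nhds).mul tendsto_const_nhds
    have := ge_of_tendsto hlim (eventually_of_mem self_mem_nhdsWithin hbnd)
    linarith
  -- near-zero bound
  set D : ℝ := 2 * c * Real.exp T * Real.exp (L * T) * h T with hD_def
  have hD : 0 < D := by
    have hhT := hh_pos T hT
    have : (0:ℝ) < 2 * c * Real.exp T * Real.exp (L * T) := by positivity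
    exact mul_pos this hhT
  set δ : ℝ := min (T / 2) (1 / D) with hδ_def
  have hδpos : 0 < δ := lt_min (by linarith) (one_div_pos.mpr hD)
  have hδT : δ < T := lt_of_le_of_lt (min_le_left _ _) (by linarith)
  have hsmall : ∀ x, 0 < x → x ≤ δ → f x ≤ 2 * h x := by
    intro x hx hxδ
    have hxT : x ≤ T := le_trans hxδ hδT.le
    have h1 := hF_le x hx
    have h2 := key x hx hxT
    have hhx := hh_pos x hx
    have hhT : h x ≤ h T := hmono x T hx hxT
    have hex : Real.exp x ≤ Real.exp T := Real.exp_le_exp.mpr hxT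
    have e1 : c * (Real.exp x * F x) ≤
        c * (Real.exp T * (2 * h x ^ 2 * x * Real.exp (L * T))) :=
      mul_le_mul_of_nonneg_left (mul_le_mul hex h2 (hF_nonneg x) (Real.exp_nonneg T)) hc.le
    have e2 : c * (Real.exp T * (2 * h x ^ 2 * x * Real.exp (L * T))) ≤ D * x * h x := by
      have hbase : (0:ℝ) ≤ 2 * c * Real.exp T * Real.exp (L * T) * x * h x :=
        mul_nonneg (mul_nonneg (by positivity) hx.le) hhx.le
      have := mul_le_mul_of_nonneg_left hhT hbase
      rw [hD_def]; nlinarith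
    have e3 : D * x ≤ 1 := by
      have hx2 : x ≤ 1 / D := le_trans hxδ (min_le_right _ _)
      rw [le_div_iff₀ hD] at hx2
      linarith
    have e4 : D * x * h x ≤ h x := by
      nlinarith [mul_nonneg (sub_nonneg.mpr e3) hhx.le]
    linarith
  -- main argument
  intro t ht
  obtain ⟨ht0, htT⟩ := ht
  by_contra hcon
  push_neg at hcon
  have htδ : δ < t := by
    by_contra hh
    push_neg at hh
    exact absurd (hsmall t ht0 hh) (not_le.mpr hcon)
  set B : Set ℝ := {x | x ∈ Icc δ t ∧ 2 * h x ≤ f x} with hB_def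
  have hBt : t ∈ B := ⟨⟨htδ.le, le_refl t⟩, hcon.le⟩
  have hsubB : Icc δ t ⊆ Ioi 0 := fun x hx => lt_of_lt_of_le hδpos hx.1
  have hBclosed : IsClosed B := by
    have hBeq : B = Icc δ t ∩ (fun x => f x - 2 * h x) ⁻¹' Ici 0 := by
      ext x
      simp only [hB_def, mem_setOf_eq, mem_inter_iff, mem_preimage, mem_Ici, sub_nonneg]
    rw [hBeq]
    exact ContinuousOn.preimage_isClosed_of_isClosed
      ((hf_cont.mono hsubB).sub (continuousOn_const.mul (hh_cont.mono hsubB)))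
      isClosed_Icc isClosed_Ici
  have hBbdd : BddBelow B := ⟨δ, fun x hx => hx.1.1⟩
  set t₀ : ℝ := sInf B with ht₀_def
  have ht₀B : t₀ ∈ B := hBclosed.csInf_mem ⟨t, hBt⟩ hBbdd
  obtain ⟨⟨hδt₀, ht₀t⟩, hft₀⟩ := ht₀B
  have ht₀pos : 0 < t₀ := lt_of_lt_of_le hδpos hδt₀
  have ht₀T : t₀ < T := lt_of_le_of_lt ht₀t htT
  have hless : ∀ s ∈ Ioo (0:ℝ) t₀, f s ≤ 2 * h s := by
    intro s hs
    rcases le_or_gt s δ with hsd | hsd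
    · exact hsmall s hs.1 hsd
    · by_contra hcon2
      push_neg at hcon2
      have hsB : s ∈ B := ⟨⟨hsd.le, le_trans hs.2.le ht₀t⟩, hcon2.le⟩
      exact absurd (csInf_le hBbdd hsB) (not_le.mpr hs.2)
  set ψ : ℝ → ℝ := fun s => Real.exp (T - s) * h s with hψ_def
  have hψ_cont : ContinuousOn ψ (Ioi 0) :=
    ((Real.continuous_exp.comp (continuous_const.sub continuous_id)).continuousOn).mul hh_cont
  have hψ_meas : AEStronglyMeasurable ψ (volume.restrict (Ioo 0 T)) :=
    (hψ_cont.mono Ioo_subset_Ioi_self).aestronglyMeasurable measurableSet_Ioo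
  have hψ_nonneg : 0 ≤ᵐ[volume.restrict (Ioo 0 T)] ψ := by
    filter_upwards [ae_restrict_mem measurableSet_Ioo] with s hs
    exact mul_nonneg (Real.exp_nonneg _) (hh_pos s hs.1).le
  have hψ_int : IntegrableOn ψ (Ioo 0 T) := by
    refine ⟨hψ_meas, ?_⟩
    rw [hasFiniteIntegral_iff_ofReal hψ_nonneg]
    exact lt_of_le_of_lt hTcond ENNReal.ofReal_lt_top
  have hψ_int0 : IntegrableOn ψ (Ioo 0 t₀) := hψ_int.mono_set (Ioo_subset_Ioo_right ht₀T.le)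
  have hψ_val : (∫ s in Ioo 0 t₀, ψ s) ≤ 1 / (8 * c) := by
    have hmono' : (∫⁻ s in Ioo 0 t₀, ENNReal.ofReal (ψ s)) ≤ ENNReal.ofReal (1 / (8 * c)) :=
      le_trans (lintegral_mono_set (Ioo_subset_Ioo_right ht₀T.le)) hTcond
    have h8c : (0:ℝ) < 1 / (8 * c) := div_pos one_pos (by linarith)
    rw [integral_eq_lintegral_of_nonneg_ae ?_ ?_]
    · calc (∫⁻ s in Ioo 0 t₀, ENNReal.ofReal (ψ s)).toReal
          ≤ (ENNReal.ofReal (1 / (8 * c))).toReal :=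
            ENNReal.toReal_mono ENNReal.ofReal_ne_top hmono'
        _ = 1 / (8 * c) := ENNReal.toReal_ofReal h8c.le
    · filter_upwards [ae_restrict_mem measurableSet_Ioo] with s hs
      exact mul_nonneg (Real.exp_nonneg _) (hh_pos s hs.1).le
    · exact (hψ_cont.mono Ioo_subset_Ioi_self).aestronglyMeasurable measurableSet_Ioo
  have hht₀ : 0 < h t₀ := hh_pos t₀ ht₀pos
  have hint_le : (∫ s in Ioo 0 t₀, Real.exp (t₀ - s) * f s ^ 2) ≤
      ∫ s in Ioo 0 t₀, 4 * h t₀ * ψ s := by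
    refine integral_mono_of_nonneg ?_ (hψ_int0.const_mul _) ?_
    · exact Eventually.of_forall fun s => mul_nonneg (Real.exp_nonneg _) (sq_nonneg _)
    · filter_upwards [ae_restrict_mem measurableSet_Ioo] with s hs
      have h1 : f s ≤ 2 * h s := hless s hs
      have h2 : 0 < f s := hf_pos s hs.1
      have h3 : 0 < h s := hh_pos s hs.1
      have h4 : h s ≤ h t₀ := hmono s t₀ hs.1 hs.2.le
      have h5 : Real.exp (t₀ - s) ≤ Real.exp (T - s) := Real.exp_le_exp.mpr (by linarith)
      have h6 : f s ^ 2 ≤ 4 * (h s * h t₀) := by nlinarith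
      calc Real.exp (t₀ - s) * f s ^ 2 ≤ Real.exp (T - s) * (4 * (h s * h t₀)) :=
            mul_le_mul h5 h6 (sq_nonneg _) (Real.exp_nonneg _)
        _ = 4 * h t₀ * ψ s := by simp only [hψ_def]; ring
  have hfin : (∫ s in Ioo 0 t₀, 4 * h t₀ * ψ s) = 4 * h t₀ * ∫ s in Ioo 0 t₀, ψ s :=
    integral_const_mul _ _
  have hmain := hineq t₀ ht₀pos
  have hc4 : 4 * h t₀ * (∫ s in Ioo 0 t₀, ψ s) ≤ 4 * h t₀ * (1 / (8 * c)) :=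
    mul_le_mul_of_nonneg_left hψ_val (by linarith)
  have hfinal : c * (∫ s in Ioo 0 t₀, Real.exp (t₀ - s) * f s ^ 2) ≤ h t₀ / 2 := by
    have : c * (∫ s in Ioo 0 t₀, Real.exp (t₀ - s) * f s ^ 2) ≤
        c * (4 * h t₀ * (1 / (8 * c))) := by
      apply mul_le_mul_of_nonneg_left _ hc.le
      rw [hfin] at hint_le
      linarith
    have heq : c * (4 * h t₀ * (1 / (8 * c))) = h t₀ / 2 := by
      have hcne : c ≠ 0 := ne_of_gt hc
      field_simp
      ring
    linarith
  linarith
end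

section
/- For every α ∈ (0, 1/2) and every t ≥ 0, ∫₀ᵗ (e^{2s} − 1) / (1 + α²(e^{2s} − 1))^{3/2} ds ≤ 1/α². -/
open Real Set

set_option maxHeartbeats 1600000 in
/-- for `α ∈ (0,1/2)` and `t ≥ 0`,
`∫₀ᵗ (e^{2s}-1)/(1+α²(e^{2s}-1))^{3/2} ds ≤ 1/α²`. -/
theorem integral_kernel_bound :
    ∀ α ∈ Set.Ioo (0:ℝ) (1/2), ∀ t ≥ (0:ℝ),
      (∫ s in (0:ℝ)..t,
          (Real.exp (2 * s) - 1)
            / (1 + α ^ 2 * (Real.exp (2 * s) - 1)) ^ ((3:ℝ)/2))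
        ≤ 1 / α ^ 2 := by
  intro α hα t ht
  obtain ⟨hα0, hα2⟩ := hα
  have hα4 : α ^ 2 < 1 / 4 := by nlinarith
  set c : ℝ := Real.sqrt (1 - α ^ 2) with hc
  have hc2 : c ^ 2 = 1 - α ^ 2 := Real.sq_sqrt (by nlinarith)
  have hc0 : 0 < c := Real.sqrt_pos.mpr (by nlinarith)
  have hc1 : c < 1 := by nlinarith
  have hc86 : (0.86 : ℝ) < c := by nlinarith
  set g : ℝ → ℝ := fun s => 1 + α ^ 2 * (Real.exp (2 * s) - 1) with hgdef
  set v : ℝ → ℝ := fun s => Real.sqrt (g s) with hvdef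
  set F : ℝ → ℝ := fun s =>
      (Real.log (v s + c) - Real.log (v s - c)) / (2 * c ^ 3)
        - (α ^ 2 * c ^ 2 * v s)⁻¹ with hFdef
  -- basic facts on [0, t]
  have hIcc : Set.uIcc (0:ℝ) t = Set.Icc 0 t := Set.uIcc_of_le ht
  have hfacts : ∀ s ∈ Set.Icc (0:ℝ) t,
      1 ≤ g s ∧ 1 ≤ v s := by
    intro s hs
    have h1 : (1:ℝ) ≤ Real.exp (2 * s) := by
      rw [show (1:ℝ) = Real.exp 0 by simp]
      exact Real.exp_le_exp.mpr (by nlinarith [hs.1])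
    have hg1 : 1 ≤ g s := by
      simp only [hgdef]; nlinarith
    exact ⟨hg1, le_trans (by norm_num) (Real.one_le_sqrt.mpr hg1)⟩
  -- derivative
  have hderiv : ∀ s ∈ Set.uIcc (0:ℝ) t,
      HasDerivAt F
        ((Real.exp (2 * s) - 1)
            / (1 + α ^ 2 * (Real.exp (2 * s) - 1)) ^ ((3:ℝ)/2)) s := by
    rw [hIcc]
    intro s hs
    obtain ⟨hg1, hv1⟩ := hfacts s hs
    have hgpos : 0 < g s := by linarith
    have hvpos : 0 < v s := by linarith
    have hvc : 0 < v s - c := by linarith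
    have hvc' : 0 < v s + c := by linarith
    have hv2 : v s ^ 2 = g s := Real.sq_sqrt hgpos.le
    have hE : HasDerivAt (fun y => Real.exp (2 * y)) (Real.exp (2 * s) * 2) s := by
      have h1 : HasDerivAt (fun y : ℝ => 2 * y) 2 s := by
        simpa using (hasDerivAt_id s).const_mul 2
      exact (Real.hasDerivAt_exp (2 * s)).comp s h1
    have hg : HasDerivAt g (α ^ 2 * (Real.exp (2 * s) * 2)) s := by
      simpa [hgdef] using ((hE.sub_const 1).const_mul (α ^ 2)).const_add 1
    have hV : HasDerivAt v (α ^ 2 * (Real.exp (2 * s) * 2) / (2 * v s)) s := by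
      simpa [hvdef] using hg.sqrt hgpos.ne'
    set V' : ℝ := α ^ 2 * (Real.exp (2 * s) * 2) / (2 * v s) with hV'
    have hF1 : HasDerivAt (fun y => (Real.log (v y + c) - Real.log (v y - c)) / (2 * c ^ 3))
        ((V' / (v s + c) - V' / (v s - c)) / (2 * c ^ 3)) s :=
      (((hV.add_const c).log hvc'.ne').sub ((hV.sub_const c).log hvc.ne')).div_const _
    have hF2 : HasDerivAt (fun y => (α ^ 2 * c ^ 2 * v y)⁻¹)
        (-(α ^ 2 * c ^ 2 * V') / (α ^ 2 * c ^ 2 * v s) ^ 2) s := by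
      have : 0 < α ^ 2 * c ^ 2 * v s := by positivity
      exact (hV.const_mul (α ^ 2 * c ^ 2)).inv this.ne'
    have := hF1.sub hF2
    refine this.congr_deriv (Eq.symm ?_)
    -- algebraic identity
    have hrw : (1 + α ^ 2 * (Real.exp (2 * s) - 1)) ^ ((3:ℝ)/2) = v s ^ 3 := by
      rw [hvdef]
      show (g s) ^ ((3:ℝ)/2) = Real.sqrt (g s) ^ 3
      rw [Real.sqrt_eq_rpow, ← Real.rpow_natCast (g s ^ ((1:ℝ)/2)) 3,
        ← Real.rpow_mul hgpos.le]
      norm_num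
    rw [hrw, hV']
    have hvc2 : v s ^ 2 - c ^ 2 = α ^ 2 * Real.exp (2 * s) := by
      rw [hv2, hc2]; simp [hgdef]; ring
    have hEpos : 0 < Real.exp (2 * s) := Real.exp_pos _
    have hα0' : (0:ℝ) < α ^ 2 := by positivity
    have hv2' : v s ^ 2 = 1 + α ^ 2 * (Real.exp (2 * s) - 1) := hv2
    have hprod : (v s + c) * (v s - c) = α ^ 2 * Real.exp (2 * s) := by
      linear_combination hv2' - hc2
    have h1 : V' / (v s + c) - V' / (v s - c) = -(2 * c) / v s := by
      rw [hV', div_sub_div _ _ hvc'.ne' hvc.ne', hprod]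
      field_simp
      ring
    have h2 : -(α ^ 2 * c ^ 2 * V') / (α ^ 2 * c ^ 2 * v s) ^ 2
        = -(Real.exp (2 * s) / (c ^ 2 * v s ^ 3)) := by
      rw [hV']
      field_simp
    have h3 : Real.exp (2 * s) - v s ^ 2 = c ^ 2 * (Real.exp (2 * s) - 1) := by
      linear_combination -hv2' - (Real.exp (2 * s) - 1) * hc2
    rw [h1, h2]
    rw [sub_neg_eq_add]
    field_simp
    linear_combination (-1) * h3
  -- integrability
  have hint : IntervalIntegrable
      (fun s => (Real.exp (2 * s) - 1)
          / (1 + α ^ 2 * (Real.exp (2 * s) - 1)) ^ ((3:ℝ)/2))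
      MeasureTheory.volume 0 t := by
    apply ContinuousOn.intervalIntegrable
    apply ContinuousOn.div
    · fun_prop
    · apply ContinuousOn.rpow_const
      · fun_prop
      · intro x hx
        rw [hIcc] at hx
        exact Or.inl (by nlinarith [(hfacts x hx).1, show g x = 1 + α ^ 2 * (Real.exp (2*x) - 1) from rfl])
    · intro x hx
      rw [hIcc] at hx
      have := (hfacts x hx).1
      have : (0:ℝ) < 1 + α ^ 2 * (Real.exp (2 * x) - 1) := by
        simpa [hgdef] using lt_of_lt_of_le zero_lt_one this
      exact (Real.rpow_pos_of_pos this _).ne'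
  rw [intervalIntegral.integral_eq_sub_of_hasDerivAt hderiv hint]
  -- now bound F t - F 0 ≤ 1/α²
  have hv0 : v 0 = 1 := by simp [hvdef, hgdef]
  obtain ⟨hg1, hv1⟩ := hfacts t (Set.mem_Icc.mpr ⟨ht, le_refl t⟩)
  have h1c : (0:ℝ) < 1 - c := by linarith
  have h1c' : (0:ℝ) < 1 + c := by linarith
  have hVc : 0 < v t - c := by linarith
  have hVc' : 0 < v t + c := by linarith
  have hVpos : 0 < v t := by linarith
  -- Part A : key log inequality at 0
  have hkey : 2 * c ≤ Real.log (1 + c) - Real.log (1 - c) := by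
    rw [← Real.log_div h1c'.ne' h1c.ne', Real.le_log_iff_exp_le (by positivity),
      le_div_iff₀ h1c]
    have he1 : Real.exp (2 * c) ≤ Real.exp 1 * Real.exp 1 := by
      rw [← Real.exp_add]
      exact Real.exp_le_exp.mpr (by linarith)
    have h39 : Real.exp 1 * Real.exp 1 < 7.39 := by
      nlinarith [Real.exp_one_lt_d9, Real.exp_pos 1]
    nlinarith [Real.exp_pos (2 * c)]
  have hid : (α ^ 2 * c ^ 2)⁻¹ = 1 / α ^ 2 + 1 / c ^ 2 := by
    field_simp
    linear_combination -hc2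
  have hA : (α ^ 2 * c ^ 2)⁻¹ - (Real.log (1 + c) - Real.log (1 - c)) / (2 * c ^ 3)
      ≤ 1 / α ^ 2 := by
    have h2c3 : (0:ℝ) < 2 * c ^ 3 := by positivity
    have hq : 2 * c / (2 * c ^ 3) ≤ (Real.log (1 + c) - Real.log (1 - c)) / (2 * c ^ 3) :=
      div_le_div_of_nonneg_right hkey h2c3.le
    have hval : 2 * c / (2 * c ^ 3) = 1 / c ^ 2 := by
      field_simp
    linarith
  -- Part B : F t ≤ 0
  have hB : (Real.log (v t + c) - Real.log (v t - c)) / (2 * c ^ 3)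
      ≤ (α ^ 2 * c ^ 2 * v t)⁻¹ := by
    have hlog : Real.log (v t + c) - Real.log (v t - c) ≤ 2 * c / (α ^ 2 * v t) := by
      rw [← Real.log_div hVc'.ne' hVc.ne']
      rcases le_or_gt 1 (c * v t) with hcV | hcV
      · have hl := Real.log_le_sub_one_of_pos (show (0:ℝ) < (v t + c) / (v t - c) by positivity)
        have he : (v t + c) / (v t - c) - 1 = 2 * c / (v t - c) := by
          field_simp
          ring
        have hd : 2 * c / (v t - c) ≤ 2 * c / (α ^ 2 * v t) := by
          apply div_le_div_of_nonneg_left (by positivity)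
            (mul_pos (by positivity) hVpos)
          nlinarith
        linarith
      · have step1 : (v t + c) / (v t - c) ≤ (1 + c) / (1 - c) := by
          rw [div_le_div_iff₀ hVc h1c]
          nlinarith
        have hlm := Real.log_le_log (div_pos hVc' hVc) step1
        have heq : (1 + c) / (1 - c) = ((1 + c) / α) ^ 2 := by
          rw [div_pow, div_eq_div_iff h1c.ne' (pow_ne_zero 2 hα0.ne')]
          linear_combination (1 + c) * hc2
        have hpow : Real.log ((1 + c) / (1 - c)) = 2 * Real.log ((1 + c) / α) := by
          rw [heq, Real.log_pow]
          push_cast; ring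
        have hl2 : Real.log ((1 + c) / α) ≤ (1 + c) / α - 1 :=
          Real.log_le_sub_one_of_pos (by positivity)
        have h6 : (1 + c) / α - 1 ≤ c ^ 2 / α ^ 2 := by
          rw [div_sub_one hα0.ne', div_le_div_iff₀ hα0 (by positivity)]
          nlinarith
        have h7 : c ^ 2 / α ^ 2 ≤ c / (α ^ 2 * v t) := by
          rw [div_le_div_iff₀ (by positivity) (mul_pos (pow_pos hα0 2) hVpos)]
          nlinarith [mul_nonneg (mul_nonneg (sq_nonneg α) hc0.le) (sub_nonneg.mpr hcV.le)]
        calc Real.log ((v t + c) / (v t - c)) ≤ Real.log ((1 + c) / (1 - c)) := hlm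
          _ = 2 * Real.log ((1 + c) / α) := hpow
          _ ≤ 2 * ((1 + c) / α - 1) := by linarith
          _ ≤ 2 * (c ^ 2 / α ^ 2) := by linarith
          _ ≤ 2 * (c / (α ^ 2 * v t)) := by linarith
          _ = 2 * c / (α ^ 2 * v t) := by ring
    have h2c3 : (0:ℝ) < 2 * c ^ 3 := by positivity
    have h8 : (2 * c / (α ^ 2 * v t)) / (2 * c ^ 3) = (α ^ 2 * c ^ 2 * v t)⁻¹ := by
      rw [div_div, inv_eq_one_div,
        div_eq_div_iff (mul_pos (mul_pos (pow_pos hα0 2) hVpos) h2c3).ne'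
          (mul_pos (mul_pos (pow_pos hα0 2) (pow_pos hc0 2)) hVpos).ne']
      ring
    have h9 := div_le_div_of_nonneg_right hlog h2c3.le
    linarith
  simp only [hFdef, hv0, mul_one]
  linarith
end
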